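/- arXiv:0710.4521 — 4 statements merged into one kernel-verified Lean document; each statement's English description precedes it below -/
import Mathlib

section
/- Let χ be a bicharacter on ℤ^I with values in 𝕜∖{0} and p ∈ I such that χ is p-finite. Then r_p(χ) = (σ_p^χ)^*χ is again p-finite, c^{r_p(χ)}_{pj} = c^χ_{pj} for all j ∈ I, and r_p(r_p(χ)) = χ. -/
/-- The quantum integer `[n]_q = 1 + q + ⋯ + q^{n-1}` for `n ∈ ℕ`. -/
def qNat {𝕜 : Type*} [Field 𝕜] (q : 𝕜) (n : ℕ) : 𝕜 :=
  ∑ i ∈ Finset.range n, q ^ i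

/-- The quantum factorial `[n]_q! = [1]_q [2]_q ⋯ [n]_q`. -/
def qFact {𝕜 : Type*} [Field 𝕜] (q : 𝕜) (n : ℕ) : 𝕜 :=
  ∏ i ∈ Finset.range n, qNat q (i + 1)

variable {𝕜 : Type*} [Field 𝕜] {I : Type*} [Fintype I] [DecidableEq I]

/-- The standard basis vector `ε_i` of `ℤ^I`. -/
def eps (i : I) : I → ℤ := Pi.single i 1

/-- `χ : ℤ^I × ℤ^I → 𝕜∖{0}` is a bicharacter. -/
def IsBichar (χ : (I → ℤ) → (I → ℤ) → 𝕜) : Prop :=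
  (∀ a b c : I → ℤ, χ (a + b) c = χ a c * χ b c) ∧
  (∀ c a b : I → ℤ, χ c (a + b) = χ c a * χ c b) ∧
  (∀ a b : I → ℤ, χ a b ≠ 0)

/-- `χ` is `p`-finite: for every `j ≠ p` there is `m ∈ ℕ₀` with
`[m+1]_{q_{pp}} = 0` or `q_{pp}^m q_{pj} q_{jp} = 1`. -/
def IsPFinite (χ : (I → ℤ) → (I → ℤ) → 𝕜) (p : I) : Prop :=
  ∀ j, j ≠ p → ∃ m : ℕ,
    qNat (χ (eps p) (eps p)) (m + 1) = 0 ∨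
    χ (eps p) (eps p) ^ m * χ (eps p) (eps j) * χ (eps j) (eps p) = 1

open Classical in
/-- The Cartan integers `c^χ_{pj}` of a (`p`-finite) bicharacter `χ`. -/
noncomputable def cartan (χ : (I → ℤ) → (I → ℤ) → 𝕜) (p j : I) : ℤ :=
  if p = j then 2
  else if h : ∃ m : ℕ,
      qNat (χ (eps p) (eps p)) (m + 1) = 0 ∨
      χ (eps p) (eps p) ^ m * χ (eps p) (eps j) * χ (eps j) (eps p) = 1
    then -(Nat.find h) else 0

/-- The reflection `σ_p^χ ∈ Aut(ℤ^I)`, `σ_p^χ(ε_j) = ε_j − c^χ_{pj} ε_p`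
(an involution, so equal to its own inverse). -/
noncomputable def sigmaChi (χ : (I → ℤ) → (I → ℤ) → 𝕜) (p : I) (a : I → ℤ) : I → ℤ :=
  a - (∑ j, cartan χ p j * a j) • eps p

/-- `r_p(χ) = (σ_p^χ)^*χ`, i.e. `r_p(χ)(a,b) = χ((σ_p^χ)⁻¹ a, (σ_p^χ)⁻¹ b)`. -/
noncomputable def rp (χ : (I → ℤ) → (I → ℤ) → 𝕜) (p : I) :
    (I → ℤ) → (I → ℤ) → 𝕜 :=
  fun a b => χ (sigmaChi χ p a) (sigmaChi χ p b)

/- ---------- auxiliary lemmas ---------- -/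

lemma sum_mul_eps (c : I → ℤ) (t : I) : ∑ i, c i * eps t i = c t := by
  simp [eps, Pi.single_apply, mul_ite]

lemma chi_zero_left {χ : (I → ℤ) → (I → ℤ) → 𝕜} (hχ : IsBichar χ) (b : I → ℤ) :
    χ 0 b = 1 := by
  have h := hχ.1 0 0 b
  simp only [add_zero] at h
  exact (mul_left_cancel₀ (hχ.2.2 0 b) (by rw [mul_one]; exact h)).symm

lemma chi_zero_right {χ : (I → ℤ) → (I → ℤ) → 𝕜} (hχ : IsBichar χ) (b : I → ℤ) :
    χ b 0 = 1 := by
  have h := hχ.2.1 b 0 0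
  simp only [add_zero] at h
  exact (mul_left_cancel₀ (hχ.2.2 b 0) (by rw [mul_one]; exact h)).symm

lemma chi_neg_left {χ : (I → ℤ) → (I → ℤ) → 𝕜} (hχ : IsBichar χ) (a b : I → ℤ) :
    χ (-a) b = (χ a b)⁻¹ :=
  eq_inv_of_mul_eq_one_right (by rw [← hχ.1, add_neg_cancel, chi_zero_left hχ])

lemma chi_neg_right {χ : (I → ℤ) → (I → ℤ) → 𝕜} (hχ : IsBichar χ) (a b : I → ℤ) :
    χ a (-b) = (χ a b)⁻¹ :=
  eq_inv_of_mul_eq_one_right (by rw [← hχ.2.1, add_neg_cancel, chi_zero_right hχ])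

lemma chi_nsmul_left {χ : (I → ℤ) → (I → ℤ) → 𝕜} (hχ : IsBichar χ) (n : ℕ) (a b : I → ℤ) :
    χ (n • a) b = χ a b ^ n := by
  induction n with
  | zero => simp [chi_zero_left hχ]
  | succ n ih => rw [succ_nsmul, hχ.1, ih, pow_succ]

lemma chi_nsmul_right {χ : (I → ℤ) → (I → ℤ) → 𝕜} (hχ : IsBichar χ) (n : ℕ) (a b : I → ℤ) :
    χ a (n • b) = χ a b ^ n := by
  induction n with
  | zero => simp [chi_zero_right hχ]
  | succ n ih => rw [succ_nsmul, hχ.2.1, ih, pow_succ]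

lemma sigma_invol {χ : (I → ℤ) → (I → ℤ) → 𝕜} {p : I} (h2 : cartan χ p p = 2)
    (a : I → ℤ) : sigmaChi χ p (sigmaChi χ p a) = a := by
  unfold sigmaChi
  set s := ∑ j, cartan χ p j * a j with hs
  have hsum : ∑ j, cartan χ p j * (a - s • eps p) j = -s := by
    have hterm : ∀ j, cartan χ p j * (a - s • eps p) j
        = cartan χ p j * a j - s * (cartan χ p j * eps p j) := by
      intro j
      simp only [Pi.sub_apply, Pi.smul_apply, smul_eq_mul]
      ring
    rw [Finset.sum_congr rfl (fun j _ => hterm j), Finset.sum_sub_distrib,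
      ← Finset.mul_sum, sum_mul_eps, h2, ← hs]
    ring
  rw [hsum]
  funext i
  simp only [Pi.sub_apply, Pi.smul_apply, smul_eq_mul, neg_mul, sub_neg_eq_add]
  ring

lemma qkey (q A B : 𝕜) (hq : q ≠ 0) (hA : A ≠ 0) (hB : B ≠ 0) (m : ℕ)
    (hm : qNat q (m + 1) = 0 ∨ q ^ m * A * B = 1)
    (hmin : ∀ k, k < m → ¬(qNat q (k + 1) = 0 ∨ q ^ k * A * B = 1)) :
    (qNat q (m + 1) = 0 ∨ q ^ m * (A * q ^ m)⁻¹ * (B * q ^ m)⁻¹ = 1) ∧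
    ∀ k, k < m → ¬(qNat q (k + 1) = 0 ∨ q ^ k * (A * q ^ m)⁻¹ * (B * q ^ m)⁻¹ = 1) := by
  have hqm : q ^ m ≠ 0 := pow_ne_zero _ hq
  have hiff : ∀ k : ℕ,
      (q ^ k * (A * q ^ m)⁻¹ * (B * q ^ m)⁻¹ = 1 ↔ q ^ k = A * q ^ m * (B * q ^ m)) := by
    intro k
    rw [mul_assoc, ← mul_inv,
      mul_inv_eq_one₀ (mul_ne_zero (mul_ne_zero hA hqm) (mul_ne_zero hB hqm))]
  constructor
  · rcases hm with h | h
    · exact Or.inl h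
    · refine Or.inr ((hiff m).2 ?_)
      linear_combination (-(q ^ m)) * h
  · intro k hk hP'
    have hk1 : ¬qNat q (k + 1) = 0 ∧ ¬q ^ k * A * B = 1 := by
      have h := hmin k hk; push_neg at h; exact h
    rcases hP' with h0 | hI
    · exact hk1.1 h0
    have hEq : q ^ k = A * q ^ m * (B * q ^ m) := (hiff k).1 hI
    by_cases hmr : q ^ m * A * B = 1
    · apply hk1.2
      have hqkm : q ^ k = q ^ m := by linear_combination hEq + (q ^ m) * hmr
      linear_combination A * B * hqkm + hmr
    · have h0 : qNat q (m + 1) = 0 := hm.resolve_right hmr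
      by_cases hq1 : q = 1
      · subst hq1
        apply hmr
        simp only [one_pow] at hEq ⊢
        linear_combination (-1 : 𝕜) * hEq
      · have hroot : q ^ (m + 1) = 1 := by
          have hg := geom_sum_mul q (m + 1)
          rw [show (∑ i ∈ Finset.range (m + 1), q ^ i) = qNat q (m + 1) from rfl, h0,
            zero_mul] at hg
          exact sub_eq_zero.mp hg.symm
        have hlt : m - k - 1 < m := by omega
        apply hmin (m - k - 1) hlt
        refine Or.inr ?_
        have p2 : q ^ (m - k - 1) * q ^ k = q ^ (m - 1) := by
          rw [← pow_add]; congr 1; omega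
        have p3 : q ^ (m - 1) * q ^ (m + 1) = q ^ m * q ^ m := by
          rw [← pow_add, ← pow_add]; congr 1; omega
        have hc : q ^ (m - k - 1) * A * B * (q ^ m * q ^ m) = 1 * (q ^ m * q ^ m) := by
          calc q ^ (m - k - 1) * A * B * (q ^ m * q ^ m)
              = q ^ (m - k - 1) * (A * q ^ m * (B * q ^ m)) := by ring
            _ = q ^ (m - k - 1) * q ^ k := by rw [← hEq]
            _ = q ^ (m - 1) := p2
            _ = q ^ (m - 1) * q ^ (m + 1) := by rw [hroot, mul_one]
            _ = 1 * (q ^ m * q ^ m) := by rw [p3, one_mul]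
        exact mul_right_cancel₀ (mul_ne_zero hqm hqm) hc

/-- If `χ` is a `p`-finite bicharacter, then `r_p(χ)` is again `p`-finite,
`c^{r_p(χ)}_{pj} = c^χ_{pj}` for all `j`, and `r_p(r_p(χ)) = χ`. -/
theorem rp_pFinite_cartan_invol (χ : (I → ℤ) → (I → ℤ) → 𝕜)
    (hχ : IsBichar χ) (p : I) (hp : IsPFinite χ p) :
    IsPFinite (rp χ p) p ∧
    (∀ j, cartan (rp χ p) p j = cartan χ p j) ∧
    rp (rp χ p) p = χ := by
  classical
  have hne := hχ.2.2
  have hq : χ (eps p) (eps p) ≠ 0 := hne _ _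
  have hcpp : cartan χ p p = 2 := by simp [cartan]
  have hσp : sigmaChi χ p (eps p) = -(eps p) := by
    unfold sigmaChi
    rw [sum_mul_eps, hcpp]
    funext i
    simp only [Pi.sub_apply, Pi.smul_apply, smul_eq_mul, Pi.neg_apply]
    ring
  have e0 : rp χ p (eps p) (eps p) = χ (eps p) (eps p) := by
    show χ (sigmaChi χ p (eps p)) (sigmaChi χ p (eps p)) = _
    rw [hσp, chi_neg_left hχ, chi_neg_right hχ, inv_inv]
  have master : ∀ j, j ≠ p → ∃ m : ℕ,
      cartan χ p j = -(m : ℤ) ∧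
      rp χ p (eps p) (eps j) = (χ (eps p) (eps j) * χ (eps p) (eps p) ^ m)⁻¹ ∧
      rp χ p (eps j) (eps p) = (χ (eps j) (eps p) * χ (eps p) (eps p) ^ m)⁻¹ ∧
      (qNat (χ (eps p) (eps p)) (m + 1) = 0 ∨
        χ (eps p) (eps p) ^ m * χ (eps p) (eps j) * χ (eps j) (eps p) = 1) ∧
      (∀ k, k < m → ¬(qNat (χ (eps p) (eps p)) (k + 1) = 0 ∨
        χ (eps p) (eps p) ^ k * χ (eps p) (eps j) * χ (eps j) (eps p) = 1)) := by
    intro j hj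
    refine ⟨Nat.find (hp j hj), ?_, ?_, ?_, Nat.find_spec (hp j hj),
      fun k hk => Nat.find_min (hp j hj) hk⟩
    · simp only [cartan, if_neg (Ne.symm hj), dif_pos (hp j hj)]
    · have hσj : sigmaChi χ p (eps j) = eps j + (Nat.find (hp j hj)) • eps p := by
        unfold sigmaChi
        rw [sum_mul_eps]
        rw [show cartan χ p j = -((Nat.find (hp j hj) : ℤ)) by
          simp only [cartan, if_neg (Ne.symm hj), dif_pos (hp j hj)]]
        rw [neg_smul, sub_neg_eq_add, natCast_zsmul]
      show χ (sigmaChi χ p (eps p)) (sigmaChi χ p (eps j)) = _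
      rw [hσp, hσj, chi_neg_left hχ, hχ.2.1, chi_nsmul_right hχ]
    · have hσj : sigmaChi χ p (eps j) = eps j + (Nat.find (hp j hj)) • eps p := by
        unfold sigmaChi
        rw [sum_mul_eps]
        rw [show cartan χ p j = -((Nat.find (hp j hj) : ℤ)) by
          simp only [cartan, if_neg (Ne.symm hj), dif_pos (hp j hj)]]
        rw [neg_smul, sub_neg_eq_add, natCast_zsmul]
      show χ (sigmaChi χ p (eps j)) (sigmaChi χ p (eps p)) = _
      rw [hσp, hσj, chi_neg_right hχ, hχ.1, chi_nsmul_left hχ]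
  have hPF : IsPFinite (rp χ p) p := by
    intro j hj
    obtain ⟨m, _, e1, e2, hspec, hmin⟩ := master j hj
    refine ⟨m, ?_⟩
    rw [e0, e1, e2]
    exact (qkey _ _ _ hq (hne _ _) (hne _ _) m hspec hmin).1
  have hcar : ∀ j, cartan (rp χ p) p j = cartan χ p j := by
    intro j
    by_cases hpj : p = j
    · subst hpj; simp [cartan]
    · have hj : j ≠ p := fun h => hpj h.symm
      obtain ⟨m, hcj, e1, e2, hspec, hmin⟩ := master j hj
      have hex' := hPF j hj
      rw [hcj]
      simp only [cartan, if_neg hpj, dif_pos hex']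
      have hfind : Nat.find hex' = m := by
        rw [Nat.find_eq_iff]
        refine ⟨?_, fun n hn => ?_⟩
        · rw [e0, e1, e2]
          exact (qkey _ _ _ hq (hne _ _) (hne _ _) m hspec hmin).1
        · rw [e0, e1, e2]
          exact (qkey _ _ _ hq (hne _ _) (hne _ _) m hspec hmin).2 n hn
      rw [hfind]
  refine ⟨hPF, hcar, ?_⟩
  have hsig : sigmaChi (rp χ p) p = sigmaChi χ p := by
    funext a
    simp only [sigmaChi, hcar]
  funext a b
  show rp χ p (sigmaChi (rp χ p) p a) (sigmaChi (rp χ p) p b) = χ a b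
  rw [hsig]
  show χ (sigmaChi χ p (sigmaChi χ p a)) (sigmaChi χ p (sigmaChi χ p b)) = χ a b
  rw [sigma_invol hcpp, sigma_invol hcpp]
end

section
/- Let χ be a bicharacter on ℤ^I with values in 𝕜∖{0}, p ∈ I with χ p-finite, and i ∈ I∖{p}; write c_{pi} = c^χ_{pi}. Then λ_i(r_p(χ)) = (q_pp^{−c_{pi}} q_{pi} q_{ip})^{c_{pi}} · λ_i(χ) and λ_i(χ^{−1}) = (−q_pp^{−c_{pi}−1} q_{pi} q_{ip})^{c_{pi}} · λ_i(χ), where the integer powers with negative exponent c_{pi} are taken in 𝕜∖{0}. -/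
variable {𝕜 : Type*} [Field 𝕜] {I : Type*} [Fintype I] [DecidableEq I]

/-- `λ_i(χ) = [−c^χ_{pi}]_{q_{pp}}! ⬝ ∏_{s=0}^{−c^χ_{pi}−1} (q_{pp}^s q_{pi} q_{ip} − 1)`. -/
noncomputable def lam (χ : (I → ℤ) → (I → ℤ) → 𝕜) (p i : I) : 𝕜 :=
  qFact (χ (eps p) (eps p)) (-(cartan χ p i)).toNat *
    ∏ s ∈ Finset.range (-(cartan χ p i)).toNat,
      (χ (eps p) (eps p) ^ s * χ (eps p) (eps i) * χ (eps i) (eps p) - 1)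


/-!
Everything depends only on `q = q_pp`, `x = q_pi q_ip` and `m = -c_pi`, through
`λ = [m]_q! ∏_{s<m} (q^s x - 1)`. For `χ⁻¹` the parameters become `q⁻¹, x⁻¹`, and the factor
comes from `[n+1]_{q⁻¹} = q^{-n} [n+1]_q` and `(q^s x)⁻¹ - 1 = -(q^s x)⁻¹ (q^s x - 1)`. For
`r_p(χ)`, `q` is unchanged and `x` becomes `(q^{2m} x)⁻¹`. If `q^m x = 1` this is `x` again.
Otherwise `q^{m+1} = 1`, so `q^s (q^{2m} x)⁻¹ = (q^{m-1-s} x)⁻¹`; reversing the product reduces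
to the previous computation, and the sign is fixed by `q^{m(m+1)/2} = (-1)^m`, valid because `m`
is least with `[m+1]_q = 0`. The same substitutions show that `m` stays the least solution of the
condition defining `-c_pi`, so the Cartan integer does not change.
-/

open Finset

section QuantumNumbers

variable {q x : 𝕜}

theorem pow_eq_one_of_qNat_eq_zero {n : ℕ} (h : qNat q n = 0) : q ^ n = 1 := by
  have := geom_sum_mul q n
  rw [← qNat, h, zero_mul] at this
  linear_combination -this

theorem qNat_add (q : 𝕜) (a b : ℕ) : qNat q (a + b) = qNat q a + q ^ a * qNat q b := by
  simp only [qNat, sum_range_add, pow_add, mul_sum]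

theorem qNat_inv_succ_mul_pow (hq : q ≠ 0) (n : ℕ) :
    qNat q⁻¹ (n + 1) * q ^ n = qNat q (n + 1) := by
  rw [qNat, qNat, sum_mul, ← sum_range_reflect (q ^ ·) (n + 1)]
  refine sum_congr rfl fun i hi => ?_
  rw [inv_pow, inv_mul_eq_iff_eq_mul₀ (pow_ne_zero _ hq), ← pow_add]
  congr 1
  have := mem_range.mp hi
  omega

theorem qFact_inv (hq : q ≠ 0) (m : ℕ) :
    qFact q⁻¹ m = (q ^ ∑ s ∈ range m, s)⁻¹ * qFact q m := by
  rw [eq_inv_mul_iff_mul_eq₀ (pow_ne_zero _ hq), qFact, qFact, ← prod_pow_eq_pow_sum,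
    ← prod_mul_distrib]
  exact prod_congr rfl fun s _ => by rw [mul_comm, qNat_inv_succ_mul_pow hq]

/-- Here `q` is a primitive `(m+1)`-th root of unity (or `1` in characteristic `m + 1`), and
`q^0 q^1 ⋯ q^m = (-1)^m` is the product of all its powers. -/
theorem pow_sum_range_eq_neg_one_pow {m : ℕ} (h0 : qNat q (m + 1) = 0)
    (hmin : ∀ k < m, qNat q (k + 1) ≠ 0) : q ^ ∑ s ∈ range (m + 1), s = (-1) ^ m := by
  have hroot := pow_eq_one_of_qNat_eq_zero h0
  have hsum := sum_range_id_mul_two (m + 1)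
  rw [Nat.add_sub_cancel] at hsum
  rcases Nat.even_or_odd' m with ⟨j, rfl | rfl⟩
  · have hT : ∑ s ∈ range (2 * j + 1), s = (2 * j + 1) * j :=
      Nat.eq_of_mul_eq_mul_right two_pos (by rw [hsum]; ring)
    rw [hT, pow_mul, hroot, one_pow, Even.neg_one_pow ⟨j, two_mul j⟩]
  · set u := q ^ (j + 1)
    have hu : u ^ 2 = 1 := by rw [← pow_mul, ← hroot]; ring_nf
    have hT : ∑ s ∈ range (2 * j + 1 + 1), s = (j + 1) * (2 * j + 1) :=
      Nat.eq_of_mul_eq_mul_right two_pos (by rw [hsum]; ring)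
    rw [hT, pow_mul, pow_succ u, pow_mul u, hu, one_pow, one_mul, Odd.neg_one_pow ⟨j, rfl⟩]
    rcases sq_eq_one_iff.mp hu with hu1 | hu1
    · -- `[2j+2]_q = (1 + q^{j+1}) [j+1]_q = 2 [j+1]_q`, so the characteristic is `2`
      have htwo : (2 : 𝕜) * qNat q (j + 1) = 0 := by
        rw [← h0, show 2 * j + 1 + 1 = (j + 1) + (j + 1) by ring, qNat_add q (j + 1) (j + 1),
          show q ^ (j + 1) = 1 from hu1]
        ring
      have h2 : (2 : 𝕜) = 0 := (mul_eq_zero.mp htwo).resolve_right (hmin j (by omega))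
      rw [hu1]
      linear_combination h2
    · exact hu1

theorem prod_range_inv_sub_one (hq : q ≠ 0) (hx : x ≠ 0) (m : ℕ) :
    ∏ s ∈ range m, ((q ^ s * x)⁻¹ - 1) =
      (-1) ^ m * ((q ^ ∑ s ∈ range m, s) * x ^ m)⁻¹ * ∏ s ∈ range m, (q ^ s * x - 1) := by
  have hterm : ∀ s ∈ range m, (q ^ s * x)⁻¹ - 1 = (-1) * (q ^ s * x)⁻¹ * (q ^ s * x - 1) :=
    fun s _ => by field_simp; ring
  rw [prod_congr rfl hterm, prod_mul_distrib, prod_mul_distrib, prod_const, card_range,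
    prod_inv_distrib, prod_mul_distrib, prod_pow_eq_pow_sum, prod_const, card_range]

end QuantumNumbers

section QLambda

variable {q x : 𝕜}

/-- `λ_i(χ) = qLambda q_{pp} (q_{pi} q_{ip}) (-c_{pi})`. -/
def qLambda (q x : 𝕜) (m : ℕ) : 𝕜 :=
  qFact q m * ∏ s ∈ range m, (q ^ s * x - 1)

/-- `-c_{pj}` is the least `m` with `CartanCond q_{pp} (q_{pj} q_{jp}) m`. -/
def CartanCond (q x : 𝕜) (m : ℕ) : Prop :=
  qNat q (m + 1) = 0 ∨ q ^ m * x = 1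

theorem qLambda_inv (hq : q ≠ 0) (hx : x ≠ 0) (m : ℕ) :
    qLambda q⁻¹ x⁻¹ m = (-(q ^ ((m : ℤ) - 1) * x)) ^ (-(m : ℤ)) * qLambda q x m := by
  have hsq : (q ^ ((m : ℤ) - 1)) ^ m = (q ^ ∑ s ∈ range m, s) * q ^ ∑ s ∈ range m, s := by
    rcases m with _ | n
    · simp
    have hsum := sum_range_id_mul_two (n + 1)
    rw [Nat.add_sub_cancel] at hsum
    push_cast
    rw [add_sub_cancel_right, zpow_natCast, ← pow_add, ← pow_mul]
    congr 1
    linarith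
  have hterm : ∀ s ∈ range m, q⁻¹ ^ s * x⁻¹ - 1 = (q ^ s * x)⁻¹ - 1 :=
    fun s _ => by rw [inv_pow, mul_inv]
  rw [qLambda, qLambda, prod_congr rfl hterm, prod_range_inv_sub_one hq hx, qFact_inv hq,
    zpow_neg, zpow_natCast, neg_pow (q ^ ((m : ℤ) - 1) * x), mul_pow, hsq]
  field_simp
  rw [← pow_mul, pow_mul', neg_one_sq, one_pow, mul_one]
  exact congrArg _ (prod_congr rfl fun s _ => by ring)

theorem qLambda_reflect (hx : x ≠ 0) {m : ℕ} (h : IsLeast {k | CartanCond q x k} m) :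
    qLambda q (q ^ m * (q ^ m * x))⁻¹ m = (q ^ m * x) ^ (-(m : ℤ)) * qLambda q x m := by
  rcases h.1 with h0 | h1
  · have hroot := pow_eq_one_of_qNat_eq_zero h0
    have hq : q ≠ 0 := by rintro rfl; simp at hroot
    have hterm : ∀ s ∈ range m,
        q ^ s * (q ^ m * (q ^ m * x))⁻¹ - 1 = (q ^ (m - 1 - s) * x)⁻¹ - 1 := by
      intro s hs
      have hexp : m * 2 = s + (m - 1 - s) + (m + 1) := by
        have := mem_range.mp hs
        omega
      congr 1
      field_simp
      rw [← pow_mul, hexp, pow_add, pow_add, hroot, mul_one]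
    have hmin : ∀ k < m, qNat q (k + 1) ≠ 0 := fun k hk hk0 =>
      absurd (h.2 (Or.inl hk0)) (not_le.mpr hk)
    have hgauss := pow_sum_range_eq_neg_one_pow h0 hmin
    rw [sum_range_succ, pow_add] at hgauss
    have hfactor : (q ^ ∑ s ∈ range m, s) * q ^ m * ((q ^ ∑ s ∈ range m, s) * x ^ m)⁻¹ =
        ((q ^ m) ^ m * x ^ m)⁻¹ := by
      have : (q ^ m) ^ m * q ^ m = 1 := by rw [← pow_succ, ← pow_mul', pow_mul, hroot, one_pow]
      field_simp
      linear_combination this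
    rw [qLambda, qLambda, prod_congr rfl hterm, prod_range_reflect (fun s => (q ^ s * x)⁻¹ - 1),
      prod_range_inv_sub_one hq hx, ← hgauss, zpow_neg, zpow_natCast, mul_pow, ← hfactor]
    ring
  · rw [h1, mul_one, inv_eq_of_mul_eq_one_right h1, one_zpow, one_mul]

theorem cartanCond_inv_iff (hq : q ≠ 0) (k : ℕ) :
    CartanCond q⁻¹ x⁻¹ k ↔ CartanCond q x k := by
  rw [CartanCond, CartanCond, ← qNat_inv_succ_mul_pow hq k, mul_eq_zero,
    or_iff_left (pow_ne_zero k hq), inv_pow, ← mul_inv, inv_eq_one]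

theorem isLeast_cartanCond_reflect {m : ℕ} (h : IsLeast {k | CartanCond q x k} m) :
    IsLeast {k | CartanCond q (q ^ m * (q ^ m * x))⁻¹ k} m := by
  refine ⟨?_, fun k hk => ?_⟩
  · rcases h.1 with h0 | h1
    · exact Or.inl h0
    · right
      rw [h1, mul_one, mul_inv_cancel₀ (left_ne_zero_of_mul_eq_one h1)]
  by_contra! hlt
  rcases hk with h0 | hk
  · exact hlt.not_ge (h.2 (Or.inl h0))
  have hne : q ^ m * (q ^ m * x) ≠ 0 := fun h0 => by simp [h0] at hk
  replace hk := (mul_inv_eq_one₀ hne).mp hk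
  rcases h.1 with h0 | h1
  · have hroot := pow_eq_one_of_qNat_eq_zero h0
    -- `q` has order dividing `m + 1`, so `q^k = q^{2m} x` turns into `q^{m-1-k} x = 1`
    have hrefl : q ^ (m - 1 - k) * x = 1 :=
      calc q ^ (m - 1 - k) * x = q ^ (m - 1 - k) * x * (q ^ (m + 1)) ^ 2 := by rw [hroot]; ring
        _ = q ^ (m - 1 - k) * q ^ 2 * (q ^ m * (q ^ m * x)) := by ring
        _ = q ^ (m + 1) := by rw [← hk, ← pow_add, ← pow_add]; congr 1; omega
        _ = 1 := hroot
    have := h.2 (Or.inr hrefl)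
    omega
  · exact hlt.not_ge (h.2 (Or.inr (by rw [hk, h1, mul_one, h1])))

end QLambda

namespace IsBichar

variable {ι : Type*} {χ : (ι → ℤ) → (ι → ℤ) → 𝕜}

theorem map_zero_left (hχ : IsBichar χ) (b : ι → ℤ) : χ 0 b = 1 := by
  have h := hχ.1 0 0 b
  rw [add_zero] at h
  exact (mul_eq_left₀ (hχ.2.2 0 b)).mp h.symm

theorem map_zero_right (hχ : IsBichar χ) (a : ι → ℤ) : χ a 0 = 1 := by
  have h := hχ.2.1 a 0 0
  rw [add_zero] at h
  exact (mul_eq_left₀ (hχ.2.2 a 0)).mp h.symm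

def addCharLeft (hχ : IsBichar χ) (b : ι → ℤ) : AddChar (ι → ℤ) 𝕜 where
  toFun a := χ a b
  map_zero_eq_one' := hχ.map_zero_left b
  map_add_eq_mul' a a' := hχ.1 a a' b

def addCharRight (hχ : IsBichar χ) (a : ι → ℤ) : AddChar (ι → ℤ) 𝕜 where
  toFun b := χ a b
  map_zero_eq_one' := hχ.map_zero_right a
  map_add_eq_mul' b b' := hχ.2.1 a b b'

theorem map_neg_left (hχ : IsBichar χ) (a b : ι → ℤ) : χ (-a) b = (χ a b)⁻¹ :=
  (hχ.addCharLeft b).map_neg_eq_inv a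

theorem map_neg_right (hχ : IsBichar χ) (a b : ι → ℤ) : χ a (-b) = (χ a b)⁻¹ :=
  (hχ.addCharRight a).map_neg_eq_inv b

theorem map_sub_zsmul_left (hχ : IsBichar χ) (a c b : ι → ℤ) (n : ℤ) :
    χ (a - n • c) b = χ a b / χ c b ^ n := by
  have h := (hχ.addCharLeft b).map_sub_eq_div a (n • c)
  rwa [AddChar.map_zsmul_eq_zpow] at h

theorem map_sub_zsmul_right (hχ : IsBichar χ) (a b c : ι → ℤ) (n : ℤ) :
    χ a (b - n • c) = χ a b / χ a c ^ n := by
  have h := (hχ.addCharRight a).map_sub_eq_div b (n • c)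
  rwa [AddChar.map_zsmul_eq_zpow] at h

end IsBichar

section Cartan

variable {ι : Type*} [DecidableEq ι] {χ : (ι → ℤ) → (ι → ℤ) → 𝕜} {p i j : ι}

section Fintype

variable [Fintype ι]

theorem sigmaChi_eps (p j : ι) :
    sigmaChi χ p (eps j) = eps j - cartan χ p j • eps p := by
  simp [sigmaChi, eps, Pi.single_apply]

theorem sigmaChi_eps_self (p : ι) :
    sigmaChi χ p (eps p) = -eps p := by
  rw [sigmaChi_eps, cartan, if_pos rfl, two_zsmul]
  abel

theorem rp_eps_self (hχ : IsBichar χ) (p : ι) : rp χ p (eps p) (eps p) = χ (eps p) (eps p) := by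
  rw [rp, sigmaChi_eps_self, hχ.map_neg_left, hχ.map_neg_right, inv_inv]

theorem rp_eps_mul_rp_eps (hχ : IsBichar χ) (p i : ι) :
    rp χ p (eps p) (eps i) * rp χ p (eps i) (eps p) =
      (χ (eps p) (eps p) ^ (-cartan χ p i) *
        (χ (eps p) (eps p) ^ (-cartan χ p i) * (χ (eps p) (eps i) * χ (eps i) (eps p))))⁻¹ := by
  have hq := hχ.2.2 (eps p) (eps p)
  rw [rp, rp, sigmaChi_eps_self, sigmaChi_eps, hχ.map_neg_left, hχ.map_neg_right,
    hχ.map_sub_zsmul_left, hχ.map_sub_zsmul_right, zpow_neg]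
  field_simp

end Fintype

theorem exists_isLeast_cartanCond (hp : IsPFinite χ p) (hjp : j ≠ p) : ∃ m,
    IsLeast {k | CartanCond (χ (eps p) (eps p)) (χ (eps p) (eps j) * χ (eps j) (eps p)) k} m := by
  classical
  obtain ⟨m, hm⟩ := hp j hjp
  exact ⟨_, Nat.isLeast_find ⟨m, by rwa [CartanCond, ← mul_assoc]⟩⟩

theorem cartan_eq_neg_of_isLeast (hpj : p ≠ j) {m : ℕ}
    (h : IsLeast
      {k | CartanCond (χ (eps p) (eps p)) (χ (eps p) (eps j) * χ (eps j) (eps p)) k} m) :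
    cartan χ p j = -m := by
  classical
  simp only [CartanCond, ← mul_assoc] at h
  rw [cartan, if_neg hpj, dif_pos ⟨m, h.1⟩, neg_inj, Nat.cast_inj]
  exact (Nat.isLeast_find _).unique h

theorem lam_eq_qLambda {m : ℕ} (hc : cartan χ p i = -m) :
    lam χ p i = qLambda (χ (eps p) (eps p)) (χ (eps p) (eps i) * χ (eps i) (eps p)) m := by
  simp only [lam, hc, neg_neg, Int.toNat_natCast, qLambda, mul_assoc]

end Cartan

/-- Lemma (le:lambda): for a `p`-finite bicharacter `χ` and `i ≠ p`, with
`c_{pi} = c^χ_{pi}`: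
`λ_i(r_p(χ)) = (q_{pp}^{−c_{pi}} q_{pi} q_{ip})^{c_{pi}} λ_i(χ)` and
`λ_i(χ⁻¹) = (−q_{pp}^{−c_{pi}−1} q_{pi} q_{ip})^{c_{pi}} λ_i(χ)`. -/
theorem lam_rp_and_inv (χ : (I → ℤ) → (I → ℤ) → 𝕜)
    (hχ : IsBichar χ) (p : I) (hp : IsPFinite χ p) (i : I) (hip : i ≠ p) :
    lam (rp χ p) p i =
      (χ (eps p) (eps p) ^ (-(cartan χ p i)) * χ (eps p) (eps i) * χ (eps i) (eps p))
        ^ (cartan χ p i) * lam χ p i ∧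
    lam (fun a b => (χ a b)⁻¹) p i =
      (-(χ (eps p) (eps p) ^ (-(cartan χ p i) - 1) * χ (eps p) (eps i) * χ (eps i) (eps p)))
        ^ (cartan χ p i) * lam χ p i := by
  have hq : χ (eps p) (eps p) ≠ 0 := hχ.2.2 _ _
  have hx : χ (eps p) (eps i) * χ (eps i) (eps p) ≠ 0 := mul_ne_zero (hχ.2.2 _ _) (hχ.2.2 _ _)
  obtain ⟨m, hm⟩ := exists_isLeast_cartanCond hp hip
  have hc : cartan χ p i = -m := cartan_eq_neg_of_isLeast hip.symm hm
  have hc_rp : cartan (rp χ p) p i = -m := by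
    apply cartan_eq_neg_of_isLeast hip.symm
    rw [rp_eps_self hχ, rp_eps_mul_rp_eps hχ, hc, neg_neg, zpow_natCast]
    exact isLeast_cartanCond_reflect hm
  have hc_inv : cartan (fun a b => (χ a b)⁻¹) p i = -m := by
    apply cartan_eq_neg_of_isLeast hip.symm
    simpa only [← mul_inv, cartanCond_inv_iff hq] using hm
  rw [lam_eq_qLambda hc, lam_eq_qLambda hc_rp, lam_eq_qLambda hc_inv, rp_eps_self hχ,
    rp_eps_mul_rp_eps hχ, hc, neg_neg, zpow_natCast, ← mul_inv, mul_assoc, mul_assoc]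
  exact ⟨qLambda_reflect hx hm, qLambda_inv hq hx m⟩
end

section
/- Let χ be a bicharacter on ℤ^I with values in 𝕜∖{0}. For every i ∈ I there exist unique 𝕜-linear maps ∂K_i, ∂L_i : 𝒰^+(χ) → 𝒰^+(χ) such that in 𝒰(χ), π^+(E)F_i − F_iπ^+(E) = π^+(∂K_i(E))·K_i − L_i·π^+(∂L_i(E)) for all E ∈ 𝒰^+(χ). These maps satisfy: ∂K_i(1) = ∂L_i(1) = 0; ∂K_i(E_j) = ∂L_i(E_j) = δ_{ij}·1; ∂K_i(EE') = ∂K_i(E)·(K_i ⊳ E') + E·∂K_i(E'); and ∂L_i(EE') = ∂L_i(E)·E' + (L_i^{−1} ⊳ E)·∂L_i(E') for all E, E' ∈ 𝒰^+(χ) and i, j ∈ I. -/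
variable {𝕜 : Type*} [Field 𝕜] {I : Type*} [Fintype I] [DecidableEq I]

/-- The generators `K_i, K_i⁻¹, L_i, L_i⁻¹, E_i, F_i` of `𝒰(χ)`. -/
inductive UGen (I : Type*) where
  | K (i : I)
  | Kinv (i : I)
  | L (i : I)
  | Linv (i : I)
  | E (i : I)
  | F (i : I)

/-- The toral generators are `K_i, K_i⁻¹, L_i, L_i⁻¹`. -/
def UGen.IsToral {I : Type*} : UGen I → Prop
  | .K _ => True
  | .Kinv _ => True
  | .L _ => True
  | .Linv _ => True
  | _ => False

variable (𝕜) in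
/-- The defining relations of the Drinfel'd double `𝒰(χ)`:
all `K_i^{±1}, L_j^{±1}` commute pairwise; `K_iK_i⁻¹ = 1 = L_iL_i⁻¹`;
`K_iE_j = q_{ij}E_jK_i`, `L_iE_j = q_{ji}⁻¹E_jL_i`, `K_iF_j = q_{ij}⁻¹F_jK_i`,
`L_iF_j = q_{ji}F_jL_i`; `E_iF_j − F_jE_i = δ_{ij}(K_i − L_i)`. -/
inductive URel (χ : (I → ℤ) → (I → ℤ) → 𝕜) :
    FreeAlgebra 𝕜 (UGen I) → FreeAlgebra 𝕜 (UGen I) → Prop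
  | comm (x y : UGen I) (hx : x.IsToral) (hy : y.IsToral) :
      URel χ (FreeAlgebra.ι 𝕜 x * FreeAlgebra.ι 𝕜 y)
        (FreeAlgebra.ι 𝕜 y * FreeAlgebra.ι 𝕜 x)
  | KKinv (i : I) :
      URel χ (FreeAlgebra.ι 𝕜 (.K i) * FreeAlgebra.ι 𝕜 (.Kinv i)) 1
  | LLinv (i : I) :
      URel χ (FreeAlgebra.ι 𝕜 (.L i) * FreeAlgebra.ι 𝕜 (.Linv i)) 1
  | KE (i j : I) :
      URel χ (FreeAlgebra.ι 𝕜 (.K i) * FreeAlgebra.ι 𝕜 (.E j))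
        (χ (eps i) (eps j) • (FreeAlgebra.ι 𝕜 (.E j) * FreeAlgebra.ι 𝕜 (.K i)))
  | LE (i j : I) :
      URel χ (FreeAlgebra.ι 𝕜 (.L i) * FreeAlgebra.ι 𝕜 (.E j))
        ((χ (eps j) (eps i))⁻¹ • (FreeAlgebra.ι 𝕜 (.E j) * FreeAlgebra.ι 𝕜 (.L i)))
  | KF (i j : I) :
      URel χ (FreeAlgebra.ι 𝕜 (.K i) * FreeAlgebra.ι 𝕜 (.F j))
        ((χ (eps i) (eps j))⁻¹ • (FreeAlgebra.ι 𝕜 (.F j) * FreeAlgebra.ι 𝕜 (.K i)))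
  | LF (i j : I) :
      URel χ (FreeAlgebra.ι 𝕜 (.L i) * FreeAlgebra.ι 𝕜 (.F j))
        (χ (eps j) (eps i) • (FreeAlgebra.ι 𝕜 (.F j) * FreeAlgebra.ι 𝕜 (.L i)))
  | EF (i j : I) :
      URel χ (FreeAlgebra.ι 𝕜 (.E i) * FreeAlgebra.ι 𝕜 (.F j) -
          FreeAlgebra.ι 𝕜 (.F j) * FreeAlgebra.ι 𝕜 (.E i))
        (if i = j then FreeAlgebra.ι 𝕜 (.K i) - FreeAlgebra.ι 𝕜 (.L i) else 0)

/-- The Drinfel'd double `𝒰(χ)`, presented by generators and relations. -/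
abbrev UAlg (χ : (I → ℤ) → (I → ℤ) → 𝕜) : Type _ := RingQuot (URel 𝕜 χ)

variable (χ : (I → ℤ) → (I → ℤ) → 𝕜)

/-- The canonical projection from the free algebra onto `𝒰(χ)`. -/
noncomputable def mkU : FreeAlgebra 𝕜 (UGen I) →ₐ[𝕜] UAlg χ :=
  RingQuot.mkAlgHom 𝕜 (URel 𝕜 χ)

/-- The generator `K_i` of `𝒰(χ)`. -/
noncomputable def uK (i : I) : UAlg χ := mkU χ (FreeAlgebra.ι 𝕜 (.K i))
/-- The generator `K_i⁻¹` of `𝒰(χ)`. -/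
noncomputable def uKinv (i : I) : UAlg χ := mkU χ (FreeAlgebra.ι 𝕜 (.Kinv i))
/-- The generator `L_i` of `𝒰(χ)`. -/
noncomputable def uL (i : I) : UAlg χ := mkU χ (FreeAlgebra.ι 𝕜 (.L i))
/-- The generator `L_i⁻¹` of `𝒰(χ)`. -/
noncomputable def uLinv (i : I) : UAlg χ := mkU χ (FreeAlgebra.ι 𝕜 (.Linv i))
/-- The generator `E_i` of `𝒰(χ)`. -/
noncomputable def uE (i : I) : UAlg χ := mkU χ (FreeAlgebra.ι 𝕜 (.E i))
/-- The generator `F_i` of `𝒰(χ)`. -/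
noncomputable def uF (i : I) : UAlg χ := mkU χ (FreeAlgebra.ι 𝕜 (.F i))

/-- The canonical algebra map `π^+ : 𝒰^+(χ) → 𝒰(χ)`, `E_i ↦ E_i`. -/
noncomputable def piPlus : FreeAlgebra 𝕜 I →ₐ[𝕜] UAlg χ :=
  FreeAlgebra.lift 𝕜 (fun i => uE χ i)

/-- The action `K_i ⊳ −` on `𝒰^+(χ)`: the algebra endomorphism with
`K_i ⊳ E_j = q_{ij} E_j`. -/
noncomputable def actK (i : I) : FreeAlgebra 𝕜 I →ₐ[𝕜] FreeAlgebra 𝕜 I :=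
  FreeAlgebra.lift 𝕜 (fun j => χ (eps i) (eps j) • FreeAlgebra.ι 𝕜 j)

/-- The action `L_i⁻¹ ⊳ −` on `𝒰^+(χ)`: the algebra endomorphism with
`L_i⁻¹ ⊳ E_j = q_{ji} E_j`. -/
noncomputable def actLinv (i : I) : FreeAlgebra 𝕜 I →ₐ[𝕜] FreeAlgebra 𝕜 I :=
  FreeAlgebra.lift 𝕜 (fun j => χ (eps j) (eps i) • FreeAlgebra.ι 𝕜 j)


set_option linter.unusedSectionVars false

section Kash

/-- Diagonal algebra endomorphism scaling `ι j` by `s j`. -/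
noncomputable def diagHom (s : I → 𝕜) : FreeAlgebra 𝕜 I →ₐ[𝕜] FreeAlgebra 𝕜 I :=
  FreeAlgebra.lift 𝕜 (fun j => s j • FreeAlgebra.ι 𝕜 j)

@[simp] lemma diagHom_ι (s : I → 𝕜) (j : I) :
    diagHom s (FreeAlgebra.ι 𝕜 j) = s j • FreeAlgebra.ι 𝕜 j :=
  FreeAlgebra.lift_ι_apply _ _

lemma diagHom_comp (s t : I → 𝕜) :
    (diagHom s).comp (diagHom t) = diagHom (fun j => s j * t j) := by
  apply FreeAlgebra.hom_ext; funext j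
  simp only [AlgHom.coe_comp, Function.comp_apply, diagHom_ι, map_smul, smul_smul]
  rw [mul_comm]

lemma diagHom_comm (s t : I → 𝕜) (x : FreeAlgebra 𝕜 I) :
    diagHom s (diagHom t x) = diagHom t (diagHom s x) := by
  have h1 := AlgHom.congr_fun (diagHom_comp s t) x
  have h2 := AlgHom.congr_fun (diagHom_comp t s) x
  simp only [AlgHom.comp_apply] at h1 h2
  rw [h1, h2, show (fun j => t j * s j) = (fun j => s j * t j) from funext fun j => mul_comm _ _]

lemma diagHom_id : diagHom (fun _ : I => (1:𝕜)) = AlgHom.id 𝕜 (FreeAlgebra 𝕜 I) := by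
  apply FreeAlgebra.hom_ext; funext j; simp

lemma actK_eq (i : I) : actK χ i = diagHom (fun j => χ (eps i) (eps j)) := rfl

lemma actLinv_eq (i : I) : actLinv χ i = diagHom (fun j => χ (eps j) (eps i)) := rfl

/-- Inverse of `actK`. -/
noncomputable def actKinv (i : I) : FreeAlgebra 𝕜 I →ₐ[𝕜] FreeAlgebra 𝕜 I :=
  diagHom (fun j => (χ (eps i) (eps j))⁻¹)

/-- The action of `L_i` on `𝒰⁺`: `ι j ↦ q_{ji}⁻¹ ι j`. -/
noncomputable def actL (i : I) : FreeAlgebra 𝕜 I →ₐ[𝕜] FreeAlgebra 𝕜 I :=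
  diagHom (fun j => (χ (eps j) (eps i))⁻¹)

/-- Matrix realization carrying `dK` in the corner. -/
noncomputable def phiK (i : I) :
    FreeAlgebra 𝕜 I →ₐ[𝕜] Matrix (Fin 2) (Fin 2) (FreeAlgebra 𝕜 I) :=
  FreeAlgebra.lift 𝕜 (fun j =>
    !![FreeAlgebra.ι 𝕜 j, if i = j then 1 else 0; 0, actK χ i (FreeAlgebra.ι 𝕜 j)])

/-- Matrix realization carrying `dL` in the corner. -/
noncomputable def phiL (i : I) :
    FreeAlgebra 𝕜 I →ₐ[𝕜] Matrix (Fin 2) (Fin 2) (FreeAlgebra 𝕜 I) :=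
  FreeAlgebra.lift 𝕜 (fun j =>
    !![actLinv χ i (FreeAlgebra.ι 𝕜 j), if i = j then 1 else 0; 0, FreeAlgebra.ι 𝕜 j])

/-- The skew-derivation `∂K_i`. -/
noncomputable def dK (i : I) : FreeAlgebra 𝕜 I →ₗ[𝕜] FreeAlgebra 𝕜 I where
  toFun x := phiK χ i x 0 1
  map_add' x y := by simp [map_add, Matrix.add_apply]
  map_smul' c x := by simp [map_smul, Matrix.smul_apply]

/-- The skew-derivation `∂L_i`. -/
noncomputable def dL (i : I) : FreeAlgebra 𝕜 I →ₗ[𝕜] FreeAlgebra 𝕜 I where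
  toFun x := phiL χ i x 0 1
  map_add' x y := by simp [map_add, Matrix.add_apply]
  map_smul' c x := by simp [map_smul, Matrix.smul_apply]

lemma dK_def (i : I) (x : FreeAlgebra 𝕜 I) : dK χ i x = phiK χ i x 0 1 := rfl
lemma dL_def (i : I) (x : FreeAlgebra 𝕜 I) : dL χ i x = phiL χ i x 0 1 := rfl

lemma phiK_apply (i : I) (x : FreeAlgebra 𝕜 I) :
    phiK χ i x 0 0 = x ∧ phiK χ i x 1 0 = 0 ∧ phiK χ i x 1 1 = actK χ i x := by
  induction x using FreeAlgebra.induction with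
  | grade0 r =>
      rw [AlgHom.commutes, AlgHom.commutes]
      simp [Matrix.algebraMap_matrix_apply]
  | grade1 j =>
      simp only [phiK, FreeAlgebra.lift_ι_apply]
      simp
  | mul a b ha hb =>
      obtain ⟨ha1, ha2, ha3⟩ := ha; obtain ⟨hb1, hb2, hb3⟩ := hb
      simp only [map_mul, Matrix.mul_apply, Fin.sum_univ_two, ha1, ha2, ha3, hb1, hb2, hb3]
      refine ⟨by simp, by simp, by simp⟩
  | add a b ha hb =>
      obtain ⟨ha1, ha2, ha3⟩ := ha; obtain ⟨hb1, hb2, hb3⟩ := hb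
      simp [Matrix.add_apply, ha1, ha2, ha3, hb1, hb2, hb3, map_add]

lemma phiL_apply (i : I) (x : FreeAlgebra 𝕜 I) :
    phiL χ i x 0 0 = actLinv χ i x ∧ phiL χ i x 1 0 = 0 ∧ phiL χ i x 1 1 = x := by
  induction x using FreeAlgebra.induction with
  | grade0 r =>
      rw [AlgHom.commutes, AlgHom.commutes]
      simp [Matrix.algebraMap_matrix_apply]
  | grade1 j =>
      simp only [phiL, FreeAlgebra.lift_ι_apply]
      simp
  | mul a b ha hb =>
      obtain ⟨ha1, ha2, ha3⟩ := ha; obtain ⟨hb1, hb2, hb3⟩ := hb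
      simp only [map_mul, Matrix.mul_apply, Fin.sum_univ_two, ha1, ha2, ha3, hb1, hb2, hb3]
      refine ⟨by simp, by simp, by simp⟩
  | add a b ha hb =>
      obtain ⟨ha1, ha2, ha3⟩ := ha; obtain ⟨hb1, hb2, hb3⟩ := hb
      simp [Matrix.add_apply, ha1, ha2, ha3, hb1, hb2, hb3, map_add]

@[simp] lemma dK_ι (i j : I) :
    dK χ i (FreeAlgebra.ι 𝕜 j) = if i = j then 1 else 0 := by
  rw [dK_def]; simp only [phiK, FreeAlgebra.lift_ι_apply]; simp

@[simp] lemma dL_ι (i j : I) :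
    dL χ i (FreeAlgebra.ι 𝕜 j) = if i = j then 1 else 0 := by
  rw [dL_def]; simp only [phiL, FreeAlgebra.lift_ι_apply]; simp

@[simp] lemma dK_one (i : I) : dK χ i 1 = 0 := by
  rw [dK_def, map_one]; simp [Matrix.one_apply]

@[simp] lemma dL_one (i : I) : dL χ i 1 = 0 := by
  rw [dL_def, map_one]; simp [Matrix.one_apply]

@[simp] lemma dK_algebraMap (i : I) (r : 𝕜) :
    dK χ i (algebraMap 𝕜 (FreeAlgebra 𝕜 I) r) = 0 := by
  rw [Algebra.algebraMap_eq_smul_one, map_smul, dK_one, smul_zero]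

@[simp] lemma dL_algebraMap (i : I) (r : 𝕜) :
    dL χ i (algebraMap 𝕜 (FreeAlgebra 𝕜 I) r) = 0 := by
  rw [Algebra.algebraMap_eq_smul_one, map_smul, dL_one, smul_zero]

lemma dK_mul (i : I) (a b : FreeAlgebra 𝕜 I) :
    dK χ i (a * b) = dK χ i a * actK χ i b + a * dK χ i b := by
  rw [dK_def, dK_def, dK_def, map_mul, Matrix.mul_apply, Fin.sum_univ_two,
    (phiK_apply χ i a).1, (phiK_apply χ i b).2.2]
  exact add_comm _ _

lemma dL_mul (i : I) (a b : FreeAlgebra 𝕜 I) :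
    dL χ i (a * b) = dL χ i a * b + actLinv χ i a * dL χ i b := by
  rw [dL_def, dL_def, dL_def, map_mul, Matrix.mul_apply, Fin.sum_univ_two,
    (phiL_apply χ i a).1, (phiL_apply χ i b).2.2]
  exact add_comm _ _

end Kash

section Kash2

lemma diagHom_inv (s : I → 𝕜) (hs : ∀ j, s j ≠ 0) (x : FreeAlgebra 𝕜 I) :
    diagHom s (diagHom (fun j => (s j)⁻¹) x) = x := by
  have h := AlgHom.congr_fun (diagHom_comp s (fun j => (s j)⁻¹)) x
  simp only [AlgHom.comp_apply] at h
  rw [h, show (fun j => s j * (s j)⁻¹) = (fun _ : I => (1:𝕜)) from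
    funext fun j => mul_inv_cancel₀ (hs j), diagHom_id]
  rfl

lemma dK_diagHom (s : I → 𝕜) (j : I) (x : FreeAlgebra 𝕜 I) :
    dK χ j (diagHom s x) = s j • diagHom s (dK χ j x) := by
  induction x using FreeAlgebra.induction with
  | grade0 r => rw [AlgHom.commutes]; simp
  | grade1 k =>
      by_cases h : j = k
      · subst h; simp
      · simp [h]
  | mul a b ha hb =>
      rw [map_mul, dK_mul, ha, dK_mul, map_add, map_mul, map_mul, hb,
        actK_eq, diagHom_comm, smul_mul_assoc, mul_smul_comm, smul_add,
        ← actK_eq]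
  | add a b ha hb => simp [ha, hb, map_add, smul_add]

lemma dL_diagHom (s : I → 𝕜) (j : I) (x : FreeAlgebra 𝕜 I) :
    dL χ j (diagHom s x) = s j • diagHom s (dL χ j x) := by
  induction x using FreeAlgebra.induction with
  | grade0 r => rw [AlgHom.commutes]; simp
  | grade1 k =>
      by_cases h : j = k
      · subst h; simp
      · simp [h]
  | mul a b ha hb =>
      rw [map_mul, dL_mul, ha, dL_mul, map_add, map_mul, map_mul, hb,
        actLinv_eq, diagHom_comm, smul_mul_assoc, mul_smul_comm, smul_add,
        ← actLinv_eq]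
  | add a b ha hb => simp [ha, hb, map_add, smul_add]

lemma dK_ι_mul (j k : I) (x : FreeAlgebra 𝕜 I) :
    dK χ j (FreeAlgebra.ι 𝕜 k * x) =
      (if j = k then actK χ j x else 0) + FreeAlgebra.ι 𝕜 k * dK χ j x := by
  rw [dK_mul, dK_ι]
  by_cases h : j = k <;> simp [h]

lemma actL_dL_ι_mul (hχ : IsBichar χ) (j k : I) (x : FreeAlgebra 𝕜 I) :
    actL χ j (dL χ j (FreeAlgebra.ι 𝕜 k * x)) =
      (if j = k then actL χ j x else 0) + FreeAlgebra.ι 𝕜 k * actL χ j (dL χ j x) := by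
  have h1 : actLinv χ j (FreeAlgebra.ι 𝕜 k) = χ (eps k) (eps j) • FreeAlgebra.ι 𝕜 k :=
    FreeAlgebra.lift_ι_apply _ _
  have h2 : actL χ j (FreeAlgebra.ι 𝕜 k) = (χ (eps k) (eps j))⁻¹ • FreeAlgebra.ι 𝕜 k :=
    FreeAlgebra.lift_ι_apply _ _
  rw [dL_mul, dL_ι, map_add, map_mul, map_mul, h1, map_smul, h2, smul_smul,
    mul_inv_cancel₀ (hχ.2.2 _ _), one_smul]
  by_cases h : j = k <;> simp [h]

variable (𝕜 I) in
/-- The underlying space of the separating representation. -/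
abbrev VRep : Type _ := ((I → ℤ) × (I → ℤ)) →₀ FreeAlgebra 𝕜 I

/-- Shift-and-map operator on `VRep`. -/
noncomputable def opV (c d : I → ℤ) (f : FreeAlgebra 𝕜 I →ₗ[𝕜] FreeAlgebra 𝕜 I) :
    VRep 𝕜 I →ₗ[𝕜] VRep 𝕜 I :=
  (Finsupp.lmapDomain _ 𝕜 (fun p : (I → ℤ) × (I → ℤ) => (p.1 + c, p.2 + d))).comp
    (Finsupp.mapRange.linearMap f)

@[simp] lemma opV_single (c d : I → ℤ) (f : FreeAlgebra 𝕜 I →ₗ[𝕜] FreeAlgebra 𝕜 I)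
    (p : (I → ℤ) × (I → ℤ)) (x : FreeAlgebra 𝕜 I) :
    opV c d f (Finsupp.single p x) = Finsupp.single (p.1 + c, p.2 + d) (f x) := by
  simp [opV, Finsupp.mapDomain_single]

/-- The images of the generators in `End (VRep)`. -/
noncomputable def rhoGen : UGen I → Module.End 𝕜 (VRep 𝕜 I)
  | .K i => opV (eps i) 0 (actK χ i).toLinearMap
  | .Kinv i => opV (-eps i) 0 (actKinv χ i).toLinearMap
  | .L i => opV 0 (eps i) (actL χ i).toLinearMap
  | .Linv i => opV 0 (-eps i) (actLinv χ i).toLinearMap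
  | .E i => opV 0 0 (LinearMap.mulLeft 𝕜 (FreeAlgebra.ι 𝕜 i))
  | .F i => - opV (eps i) 0 (dK χ i) + opV 0 (eps i) ((actL χ i).toLinearMap ∘ₗ dL χ i)

/-- The representation on the free algebra level. -/
noncomputable def rhoFree : FreeAlgebra 𝕜 (UGen I) →ₐ[𝕜] Module.End 𝕜 (VRep 𝕜 I) :=
  FreeAlgebra.lift 𝕜 (rhoGen χ)

lemma toral_form (g : UGen I) (hg : g.IsToral) :
    ∃ (c d : I → ℤ) (s : I → 𝕜), rhoGen χ g = opV c d (diagHom s).toLinearMap := by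
  cases g with
  | K i => exact ⟨eps i, 0, _, rfl⟩
  | Kinv i => exact ⟨-eps i, 0, _, rfl⟩
  | L i => exact ⟨0, eps i, _, rfl⟩
  | Linv i => exact ⟨0, -eps i, _, rfl⟩
  | E i => exact absurd hg (by simp [UGen.IsToral])
  | F i => exact absurd hg (by simp [UGen.IsToral])

end Kash2

section Kash3

lemma diagHom_inv' (s : I → 𝕜) (hs : ∀ j, s j ≠ 0) (x : FreeAlgebra 𝕜 I) :
    diagHom (fun j => (s j)⁻¹) (diagHom s x) = x := by
  have h := diagHom_inv (fun j => (s j)⁻¹) (fun j => inv_ne_zero (hs j)) x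
  rwa [show (fun j => ((s j)⁻¹)⁻¹) = s from funext fun j => inv_inv _] at h

lemma relComm (a b : UGen I) (ha : a.IsToral) (hb : b.IsToral) :
    rhoGen χ a * rhoGen χ b = rhoGen χ b * rhoGen χ a := by
  obtain ⟨c, d, s, hs⟩ := toral_form χ a ha
  obtain ⟨c', d', t, ht⟩ := toral_form χ b hb
  rw [hs, ht]
  refine Finsupp.lhom_ext fun p v => ?_
  simp only [Module.End.mul_apply, opV_single, AlgHom.toLinearMap_apply]
  rw [diagHom_comm, add_right_comm, add_right_comm p.2]

lemma relKKinv (hχ : IsBichar χ) (i : I) :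
    rhoGen χ (.K i) * rhoGen χ (.Kinv i) = 1 := by
  refine Finsupp.lhom_ext fun p v => ?_
  simp only [rhoGen, Module.End.mul_apply, opV_single, AlgHom.toLinearMap_apply,
    Module.End.one_apply, actKinv]
  rw [actK_eq, diagHom_inv _ (fun j => hχ.2.2 _ _) v]
  simp

lemma relLLinv (hχ : IsBichar χ) (i : I) :
    rhoGen χ (.L i) * rhoGen χ (.Linv i) = 1 := by
  refine Finsupp.lhom_ext fun p v => ?_
  simp only [rhoGen, Module.End.mul_apply, opV_single, AlgHom.toLinearMap_apply,
    Module.End.one_apply, actL]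
  rw [actLinv_eq, diagHom_inv' _ (fun j => hχ.2.2 _ _) v]
  simp

lemma relKE (i j : I) : rhoGen χ (.K i) * rhoGen χ (.E j) =
    χ (eps i) (eps j) • (rhoGen χ (.E j) * rhoGen χ (.K i)) := by
  refine Finsupp.lhom_ext fun p v => ?_
  simp only [rhoGen, Module.End.mul_apply, LinearMap.smul_apply, opV_single,
    AlgHom.toLinearMap_apply, LinearMap.mulLeft_apply, add_zero, zero_add,
    Finsupp.smul_single]
  rw [show (actK χ i) (FreeAlgebra.ι 𝕜 j * v) =
      χ (eps i) (eps j) • (FreeAlgebra.ι 𝕜 j * actK χ i v) by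
    rw [map_mul, actK_eq, diagHom_ι, ← actK_eq, smul_mul_assoc]]

lemma relLE (i j : I) : rhoGen χ (.L i) * rhoGen χ (.E j) =
    (χ (eps j) (eps i))⁻¹ • (rhoGen χ (.E j) * rhoGen χ (.L i)) := by
  refine Finsupp.lhom_ext fun p v => ?_
  simp only [rhoGen, Module.End.mul_apply, LinearMap.smul_apply, opV_single,
    AlgHom.toLinearMap_apply, LinearMap.mulLeft_apply, add_zero, zero_add,
    Finsupp.smul_single]
  rw [show (actL χ i) (FreeAlgebra.ι 𝕜 j * v) =
      (χ (eps j) (eps i))⁻¹ • (FreeAlgebra.ι 𝕜 j * actL χ i v) by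
    rw [map_mul, actL, diagHom_ι, smul_mul_assoc]]

lemma relKF (hχ : IsBichar χ) (i j : I) : rhoGen χ (.K i) * rhoGen χ (.F j) =
    (χ (eps i) (eps j))⁻¹ • (rhoGen χ (.F j) * rhoGen χ (.K i)) := by
  refine Finsupp.lhom_ext fun p v => ?_
  have hK : dK χ j (actK χ i v) = χ (eps i) (eps j) • actK χ i (dK χ j v) :=
    dK_diagHom χ (fun k => χ (eps i) (eps k)) j v
  have hL : dL χ j (actK χ i v) = χ (eps i) (eps j) • actK χ i (dL χ j v) :=
    dL_diagHom χ (fun k => χ (eps i) (eps k)) j v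
  simp only [rhoGen, Module.End.mul_apply, LinearMap.smul_apply, LinearMap.add_apply,
    LinearMap.neg_apply, opV_single, AlgHom.toLinearMap_apply, LinearMap.coe_comp,
    Function.comp_apply, map_add, map_neg, add_zero, zero_add, Finsupp.smul_single,
    smul_neg, smul_add, Finsupp.single_neg, hK, hL, map_smul]
  rw [show actL χ j (actK χ i (dL χ j v)) = actK χ i (actL χ j (dL χ j v)) from
    diagHom_comm (fun k => (χ (eps k) (eps j))⁻¹) (fun k => χ (eps i) (eps k)) _]
  rw [smul_smul, smul_smul, inv_mul_cancel₀ (hχ.2.2 _ _), one_smul, one_smul,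
    add_right_comm p.1]

lemma relLF (hχ : IsBichar χ) (i j : I) : rhoGen χ (.L i) * rhoGen χ (.F j) =
    χ (eps j) (eps i) • (rhoGen χ (.F j) * rhoGen χ (.L i)) := by
  refine Finsupp.lhom_ext fun p v => ?_
  have hK : dK χ j (actL χ i v) = (χ (eps j) (eps i))⁻¹ • actL χ i (dK χ j v) :=
    dK_diagHom χ (fun k => (χ (eps k) (eps i))⁻¹) j v
  have hL : dL χ j (actL χ i v) = (χ (eps j) (eps i))⁻¹ • actL χ i (dL χ j v) :=
    dL_diagHom χ (fun k => (χ (eps k) (eps i))⁻¹) j v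
  simp only [rhoGen, Module.End.mul_apply, LinearMap.smul_apply, LinearMap.add_apply,
    LinearMap.neg_apply, opV_single, AlgHom.toLinearMap_apply, LinearMap.coe_comp,
    Function.comp_apply, map_add, map_neg, add_zero, zero_add, Finsupp.smul_single,
    smul_neg, smul_add, Finsupp.single_neg, hK, hL, map_smul]
  rw [show actL χ j (actL χ i (dL χ j v)) = actL χ i (actL χ j (dL χ j v)) from
    diagHom_comm (fun k => (χ (eps k) (eps j))⁻¹) (fun k => (χ (eps k) (eps i))⁻¹) _]
  rw [smul_smul, smul_smul, mul_inv_cancel₀ (hχ.2.2 _ _), one_smul, one_smul,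
    add_right_comm p.2]

lemma relEF (hχ : IsBichar χ) (i j : I) :
    rhoGen χ (.E i) * rhoGen χ (.F j) - rhoGen χ (.F j) * rhoGen χ (.E i) =
      if i = j then rhoGen χ (.K i) - rhoGen χ (.L i) else 0 := by
  refine Finsupp.lhom_ext fun p v => ?_
  simp only [rhoGen, Module.End.mul_apply, LinearMap.sub_apply, LinearMap.add_apply,
    LinearMap.neg_apply, opV_single, AlgHom.toLinearMap_apply, LinearMap.coe_comp,
    Function.comp_apply, LinearMap.mulLeft_apply, map_add, map_neg, add_zero, zero_add]
  rw [dK_ι_mul χ j i v, actL_dL_ι_mul χ hχ j i v]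
  by_cases hij : i = j
  · subst hij
    rw [if_pos rfl, if_pos rfl, if_pos rfl]
    simp only [LinearMap.sub_apply, opV_single, AlgHom.toLinearMap_apply,
      Finsupp.single_add, add_zero, zero_add]
    abel
  · rw [if_neg (show ¬ j = i from fun h => hij h.symm),
      if_neg (show ¬ j = i from fun h => hij h.symm), if_neg hij]
    simp only [LinearMap.zero_apply, Finsupp.single_add, Finsupp.single_zero, zero_add]
    abel

lemma rhoFree_ι (g : UGen I) : rhoFree χ (FreeAlgebra.ι 𝕜 g) = rhoGen χ g :=
  FreeAlgebra.lift_ι_apply _ _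

lemma rho_rel (hχ : IsBichar χ) : ∀ ⦃x y⦄, URel 𝕜 χ x y → rhoFree χ x = rhoFree χ y := by
  intro x y h
  induction h with
  | comm a b ha hb => rw [map_mul, map_mul, rhoFree_ι, rhoFree_ι]; exact relComm χ a b ha hb
  | KKinv i => rw [map_mul, map_one, rhoFree_ι, rhoFree_ι]; exact relKKinv χ hχ i
  | LLinv i => rw [map_mul, map_one, rhoFree_ι, rhoFree_ι]; exact relLLinv χ hχ i
  | KE i j => rw [map_mul, map_smul, map_mul, rhoFree_ι, rhoFree_ι]; exact relKE χ i j
  | LE i j => rw [map_mul, map_smul, map_mul, rhoFree_ι, rhoFree_ι]; exact relLE χ i j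
  | KF i j => rw [map_mul, map_smul, map_mul, rhoFree_ι, rhoFree_ι]; exact relKF χ hχ i j
  | LF i j => rw [map_mul, map_smul, map_mul, rhoFree_ι, rhoFree_ι]; exact relLF χ hχ i j
  | EF i j =>
      rw [map_sub, map_mul, map_mul, rhoFree_ι, rhoFree_ι, apply_ite (rhoFree χ),
        map_sub, map_zero, rhoFree_ι, rhoFree_ι]
      exact relEF χ hχ i j

end Kash3

section Kash4

lemma mkU_rel {x y : FreeAlgebra 𝕜 (UGen I)} (h : URel 𝕜 χ x y) : mkU χ x = mkU χ y :=
  RingQuot.mkAlgHom_rel 𝕜 h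

lemma piPlus_ι (j : I) : piPlus χ (FreeAlgebra.ι 𝕜 j) = uE χ j :=
  FreeAlgebra.lift_ι_apply _ _

lemma uK_mul_piPlus (i : I) (E : FreeAlgebra 𝕜 I) :
    uK χ i * piPlus χ E = piPlus χ (actK χ i E) * uK χ i := by
  induction E using FreeAlgebra.induction with
  | grade0 r => simp only [AlgHom.commutes]; exact (Algebra.commutes r _).symm
  | grade1 j =>
      have h : uK χ i * uE χ j = χ (eps i) (eps j) • (uE χ j * uK χ i) := by
        have h0 := mkU_rel χ (URel.KE i j)
        rw [map_mul, map_smul, map_mul] at h0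
        exact h0
      rw [piPlus_ι χ, h, show actK χ i (FreeAlgebra.ι 𝕜 j) =
          χ (eps i) (eps j) • FreeAlgebra.ι 𝕜 j from FreeAlgebra.lift_ι_apply _ _,
        map_smul, piPlus_ι χ, smul_mul_assoc]
  | mul a b ha hb =>
      rw [map_mul, ← mul_assoc, ha, mul_assoc, hb, ← mul_assoc, ← map_mul, ← map_mul]
  | add a b ha hb =>
      rw [map_add, mul_add, ha, hb, map_add, map_add, add_mul]

lemma piPlus_mul_uL (hχ : IsBichar χ) (i : I) (E : FreeAlgebra 𝕜 I) :
    piPlus χ E * uL χ i = uL χ i * piPlus χ (actLinv χ i E) := by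
  induction E using FreeAlgebra.induction with
  | grade0 r => simp only [AlgHom.commutes]; exact Algebra.commutes r _
  | grade1 j =>
      have h : uL χ i * uE χ j = (χ (eps j) (eps i))⁻¹ • (uE χ j * uL χ i) := by
        have h0 := mkU_rel χ (URel.LE i j)
        rw [map_mul, map_smul, map_mul] at h0
        exact h0
      have h2 : uE χ j * uL χ i = χ (eps j) (eps i) • (uL χ i * uE χ j) := by
        rw [h, smul_smul, mul_inv_cancel₀ (hχ.2.2 _ _), one_smul]
      rw [piPlus_ι χ, h2, show actLinv χ i (FreeAlgebra.ι 𝕜 j) =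
          χ (eps j) (eps i) • FreeAlgebra.ι 𝕜 j from FreeAlgebra.lift_ι_apply _ _,
        map_smul, piPlus_ι χ, mul_smul_comm]
  | mul a b ha hb =>
      rw [map_mul, mul_assoc, hb, ← mul_assoc, ha, mul_assoc, ← map_mul, ← map_mul]
  | add a b ha hb =>
      rw [map_add, add_mul, ha, hb, map_add, map_add, mul_add]

lemma commEFi (hχ : IsBichar χ) (i : I) (E : FreeAlgebra 𝕜 I) :
    piPlus χ E * uF χ i - uF χ i * piPlus χ E =
      piPlus χ (dK χ i E) * uK χ i - uL χ i * piPlus χ (dL χ i E) := by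
  induction E using FreeAlgebra.induction with
  | grade0 r =>
      rw [AlgHom.commutes, Algebra.commutes, sub_self, dK_algebraMap, dL_algebraMap,
        map_zero, zero_mul, mul_zero, sub_self]
  | grade1 j =>
      have h : uE χ j * uF χ i - uF χ i * uE χ j =
          mkU χ (if j = i then FreeAlgebra.ι 𝕜 (.K j) - FreeAlgebra.ι 𝕜 (.L j) else 0) := by
        have h0 := mkU_rel χ (URel.EF j i)
        rw [map_sub, map_mul, map_mul] at h0
        exact h0
      rw [piPlus_ι χ, h, dK_ι, dL_ι]
      by_cases hij : i = j
      · subst hij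
        rw [if_pos rfl, if_pos rfl, map_one, one_mul, mul_one, map_sub]
        rfl
      · rw [if_neg hij, if_neg (show ¬ j = i from fun h' => hij h'.symm),
          map_zero, map_zero, zero_mul, mul_zero, sub_self]
  | mul a b ha hb =>
      have key : piPlus χ a * piPlus χ b * uF χ i - uF χ i * (piPlus χ a * piPlus χ b) =
          piPlus χ a * (piPlus χ b * uF χ i - uF χ i * piPlus χ b) +
          (piPlus χ a * uF χ i - uF χ i * piPlus χ a) * piPlus χ b := by
        simp only [mul_sub, sub_mul, mul_assoc]
        abel
      have main : ∀ (A B DKa DKb DLa DLb AKb ALa : UAlg χ),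
          uK χ i * B = AKb * uK χ i → A * uL χ i = uL χ i * ALa →
          A * (DKb * uK χ i - uL χ i * DLb) + (DKa * uK χ i - uL χ i * DLa) * B =
            (DKa * AKb + A * DKb) * uK χ i - uL χ i * (DLa * B + ALa * DLb) := by
        intro A B DKa DKb DLa DLb AKb ALa hK hL
        have e1 : A * (uL χ i * DLb) = uL χ i * (ALa * DLb) := by
          rw [← mul_assoc, hL, mul_assoc]
        have e2 : DKa * uK χ i * B = DKa * AKb * uK χ i := by
          rw [mul_assoc, hK, ← mul_assoc]
        simp only [mul_sub, sub_mul, mul_add, add_mul]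
        rw [e1, e2]
        simp only [mul_assoc]
        abel
      rw [map_mul, key, ha, hb, dK_mul, dL_mul, map_add, map_add,
        map_mul, map_mul, map_mul, map_mul]
      exact main _ _ _ _ _ _ _ _ (uK_mul_piPlus χ i b) (piPlus_mul_uL χ hχ i a)
  | add a b ha hb =>
      have key : ∀ X Y : UAlg χ, (X + Y) * uF χ i - uF χ i * (X + Y) =
          (X * uF χ i - uF χ i * X) + (Y * uF χ i - uF χ i * Y) := by
        intro X Y; noncomm_ring
      rw [map_add, key, ha, hb, map_add, map_add, map_add, map_add, add_mul, mul_add]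
      abel

lemma sep (hχ : IsBichar χ) (i : I) (x y : FreeAlgebra 𝕜 I)
    (h : piPlus χ x * uK χ i = uL χ i * piPlus χ y) : x = 0 ∧ y = 0 := by
  let ρ : UAlg χ →ₐ[𝕜] Module.End 𝕜 (VRep 𝕜 I) :=
    RingQuot.liftAlgHom 𝕜 ⟨rhoFree χ, fun _ _ hr => rho_rel χ hχ hr⟩
  have hmk : ∀ z, ρ (mkU χ z) = rhoFree χ z := fun z =>
    RingQuot.liftAlgHom_mkAlgHom_apply _ _ _ _
  have hpi : ∀ (E : FreeAlgebra 𝕜 I) (p : (I → ℤ) × (I → ℤ)) (v : FreeAlgebra 𝕜 I),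
      ρ (piPlus χ E) (Finsupp.single p v) = Finsupp.single p (E * v) := by
    intro E
    induction E using FreeAlgebra.induction with
    | grade0 r =>
        intro p v
        rw [AlgHom.commutes, AlgHom.commutes, Module.algebraMap_end_apply,
          Finsupp.smul_single, Algebra.smul_def]
    | grade1 j =>
        intro p v
        rw [piPlus_ι χ, show uE χ j = mkU χ (FreeAlgebra.ι 𝕜 (.E j)) from rfl, hmk, rhoFree_ι]
        simp [rhoGen]
    | mul a b ha hb =>
        intro p v
        rw [map_mul, map_mul, Module.End.mul_apply, hb, ha, mul_assoc]
    | add a b ha hb =>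
        intro p v
        rw [map_add, map_add, LinearMap.add_apply, ha, hb, add_mul, Finsupp.single_add]
  have happ := congrArg ρ h
  rw [map_mul, map_mul] at happ
  have h2 := LinearMap.congr_fun happ
    (Finsupp.single ((0, 0) : (I → ℤ) × (I → ℤ)) (1 : FreeAlgebra 𝕜 I))
  rw [Module.End.mul_apply, Module.End.mul_apply,
    show uK χ i = mkU χ (FreeAlgebra.ι 𝕜 (.K i)) from rfl, hmk, rhoFree_ι,
    show uL χ i = mkU χ (FreeAlgebra.ι 𝕜 (.L i)) from rfl, hmk, rhoFree_ι, hpi] at h2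
  simp only [rhoGen, opV_single, AlgHom.toLinearMap_apply, map_one, zero_add, add_zero,
    mul_one] at h2
  rw [hpi] at h2
  simp only [mul_one] at h2
  -- h2 : single (eps i, 0) x = single (0, eps i) (actL χ i y)
  have hne : ((eps i, (0 : I → ℤ)) : (I → ℤ) × (I → ℤ)) ≠ ((0 : I → ℤ), eps i) := by
    intro hcon
    have h1 := congrArg (fun q : (I → ℤ) × (I → ℤ) => q.1 i) hcon
    simp [eps] at h1
  rcases (Finsupp.single_eq_single_iff _ _ _ _).mp h2 with ⟨hp, _⟩ | ⟨hx0, hy0⟩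
  · exact absurd hp hne
  · refine ⟨hx0, ?_⟩
    have hyy : diagHom (fun k => χ (eps k) (eps i)) (actL χ i y) = y :=
      diagHom_inv _ (fun k => hχ.2.2 _ _) y
    rw [hy0, map_zero] at hyy
    exact hyy.symm

end Kash4
/-- Lemma (le:commEFi): for each `i ∈ I` there are unique `𝕜`-linear maps
`∂K_i, ∂L_i : 𝒰^+(χ) → 𝒰^+(χ)` with
`[E, F_i] = ∂K_i(E) K_i − L_i ∂L_i(E)` in `𝒰(χ)` for all `E ∈ 𝒰^+(χ)`;
these maps are skew-derivations with the stated values and Leibniz rules. -/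
theorem kashiwara_maps (hχ : IsBichar χ) (i : I) :
    (∃! d : (FreeAlgebra 𝕜 I →ₗ[𝕜] FreeAlgebra 𝕜 I) ×
        (FreeAlgebra 𝕜 I →ₗ[𝕜] FreeAlgebra 𝕜 I),
      ∀ E : FreeAlgebra 𝕜 I,
        piPlus χ E * uF χ i - uF χ i * piPlus χ E =
          piPlus χ (d.1 E) * uK χ i - uL χ i * piPlus χ (d.2 E)) ∧
    (∀ dK dL : FreeAlgebra 𝕜 I →ₗ[𝕜] FreeAlgebra 𝕜 I,
      (∀ E : FreeAlgebra 𝕜 I,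
        piPlus χ E * uF χ i - uF χ i * piPlus χ E =
          piPlus χ (dK E) * uK χ i - uL χ i * piPlus χ (dL E)) →
      dK 1 = 0 ∧ dL 1 = 0 ∧
      (∀ j, dK (FreeAlgebra.ι 𝕜 j) = if i = j then 1 else 0) ∧
      (∀ j, dL (FreeAlgebra.ι 𝕜 j) = if i = j then 1 else 0) ∧
      (∀ E E' : FreeAlgebra 𝕜 I,
        dK (E * E') = dK E * actK χ i E' + E * dK E') ∧
      (∀ E E' : FreeAlgebra 𝕜 I,
        dL (E * E') = dL E * E' + actLinv χ i E * dL E')) := by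
  have uniq : ∀ (d1 d2 : FreeAlgebra 𝕜 I →ₗ[𝕜] FreeAlgebra 𝕜 I),
      (∀ E : FreeAlgebra 𝕜 I,
        piPlus χ E * uF χ i - uF χ i * piPlus χ E =
          piPlus χ (d1 E) * uK χ i - uL χ i * piPlus χ (d2 E)) →
      d1 = dK χ i ∧ d2 = dL χ i := by
    intro d1 d2 hd
    have key : ∀ E, d1 E - dK χ i E = 0 ∧ d2 E - dL χ i E = 0 := by
      intro E
      have h2 := commEFi χ hχ i E
      rw [hd E] at h2
      have h4 := sub_eq_sub_iff_sub_eq_sub.mp h2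
      have h3 : piPlus χ (d1 E - dK χ i E) * uK χ i =
          uL χ i * piPlus χ (d2 E - dL χ i E) := by
        rw [map_sub, map_sub, sub_mul, mul_sub]
        exact h4
      exact sep χ hχ i _ _ h3
    constructor
    · exact LinearMap.ext fun E => sub_eq_zero.mp (key E).1
    · exact LinearMap.ext fun E => sub_eq_zero.mp (key E).2
  constructor
  · refine ⟨(dK χ i, dL χ i), fun E => commEFi χ hχ i E, ?_⟩
    rintro ⟨d1, d2⟩ hd
    obtain ⟨h1, h2⟩ := uniq d1 d2 hd
    rw [h1, h2]
  · intro dK' dL' hd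
    obtain ⟨h1, h2⟩ := uniq dK' dL' hd
    subst h1; subst h2
    exact ⟨dK_one χ i, dL_one χ i, fun j => dK_ι χ i j, fun j => dL_ι χ i j,
      fun E E' => dK_mul χ i E E', fun E E' => dL_mul χ i E E'⟩
end

section
/- Let χ be a bicharacter on ℤ^I with values in 𝕜∖{0}. There exists a unique algebra automorphism φ₁ of 𝒰(χ) such that φ₁(K_i) = K_i^{−1}, φ₁(K_i^{−1}) = K_i, φ₁(L_i) = L_i^{−1}, φ₁(L_i^{−1}) = L_i, φ₁(E_i) = F_iL_i^{−1}, and φ₁(F_i) = K_i^{−1}E_i for all i ∈ I. -/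
set_option linter.unusedSectionVars false


variable {𝕜 : Type*} [Field 𝕜] {I : Type*} [Fintype I] [DecidableEq I]

variable (χ : (I → ℤ) → (I → ℤ) → 𝕜)

/-! ### Auxiliary lemmas for `exists_unique_phi1` -/

lemma uComm {x y : UGen I} (hx : x.IsToral) (hy : y.IsToral) :
    mkU χ (FreeAlgebra.ι 𝕜 x) * mkU χ (FreeAlgebra.ι 𝕜 y)
      = mkU χ (FreeAlgebra.ι 𝕜 y) * mkU χ (FreeAlgebra.ι 𝕜 x) := by
  rw [← map_mul, ← map_mul]
  exact RingQuot.mkAlgHom_rel 𝕜 (URel.comm x y hx hy)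

lemma uKKinv (i : I) : uK χ i * uKinv χ i = 1 := by
  rw [uK, uKinv, ← map_mul, ← map_one (mkU χ)]
  exact RingQuot.mkAlgHom_rel 𝕜 (URel.KKinv i)

lemma uLLinv (i : I) : uL χ i * uLinv χ i = 1 := by
  rw [uL, uLinv, ← map_mul, ← map_one (mkU χ)]
  exact RingQuot.mkAlgHom_rel 𝕜 (URel.LLinv i)

lemma uKinvK (i : I) : uKinv χ i * uK χ i = 1 := by
  rw [show uKinv χ i * uK χ i = uK χ i * uKinv χ i from uComm χ trivial trivial, uKKinv]

lemma uLinvL (i : I) : uLinv χ i * uL χ i = 1 := by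
  rw [show uLinv χ i * uL χ i = uL χ i * uLinv χ i from uComm χ trivial trivial, uLLinv]

lemma uKE (i j : I) : uK χ i * uE χ j = χ (eps i) (eps j) • (uE χ j * uK χ i) := by
  rw [uK, uE, ← map_mul, ← map_mul, ← map_smul]
  exact RingQuot.mkAlgHom_rel 𝕜 (URel.KE i j)

lemma uLE (i j : I) : uL χ i * uE χ j = (χ (eps j) (eps i))⁻¹ • (uE χ j * uL χ i) := by
  rw [uL, uE, ← map_mul, ← map_mul, ← map_smul]
  exact RingQuot.mkAlgHom_rel 𝕜 (URel.LE i j)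

lemma uKF (i j : I) : uK χ i * uF χ j = (χ (eps i) (eps j))⁻¹ • (uF χ j * uK χ i) := by
  rw [uK, uF, ← map_mul, ← map_mul, ← map_smul]
  exact RingQuot.mkAlgHom_rel 𝕜 (URel.KF i j)

lemma uLF (i j : I) : uL χ i * uF χ j = χ (eps j) (eps i) • (uF χ j * uL χ i) := by
  rw [uL, uF, ← map_mul, ← map_mul, ← map_smul]
  exact RingQuot.mkAlgHom_rel 𝕜 (URel.LF i j)

lemma uEF (i j : I) :
    uE χ i * uF χ j - uF χ j * uE χ i = if i = j then uK χ i - uL χ i else 0 := by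
  have h := RingQuot.mkAlgHom_rel 𝕜 (URel.EF (χ := χ) i j)
  rw [map_sub, map_mul, map_mul, apply_ite (RingQuot.mkAlgHom 𝕜 (URel 𝕜 χ)), map_sub,
    map_zero] at h
  exact h

lemma moveR {a b x : UAlg χ} {q : 𝕜} (h : a * b = q • (b * a)) :
    a * (b * x) = q • (b * (a * x)) := by
  rw [← mul_assoc, h, smul_mul_assoc, mul_assoc]

lemma commR {a b x : UAlg χ} (h : a * b = b * a) : a * (b * x) = b * (a * x) := by
  rw [← mul_assoc, h, mul_assoc]

lemma rev {a b : UAlg χ} {q : 𝕜} (hq : q ≠ 0) (h : a * b = q • (b * a)) :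
    b * a = q⁻¹ • (a * b) := by
  rw [h, smul_smul, inv_mul_cancel₀ hq, one_smul]

lemma conj_move {a ainv b : UAlg χ} {q : 𝕜} (hq : q ≠ 0) (h1 : ainv * a = 1)
    (h2 : a * ainv = 1) (h : a * b = q • (b * a)) : ainv * b = q⁻¹ • (b * ainv) := by
  have key : b * ainv = q • (ainv * b) := by
    calc b * ainv = (ainv * a) * (b * ainv) := by rw [h1, one_mul]
    _ = ainv * ((a * b) * ainv) := by rw [mul_assoc, ← mul_assoc a]
    _ = ainv * ((q • (b * a)) * ainv) := by rw [h]
    _ = q • (ainv * (b * (a * ainv))) := by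
        rw [smul_mul_assoc, mul_smul_comm, mul_assoc]
    _ = q • (ainv * b) := by rw [h2, mul_one]
  rw [key, smul_smul, inv_mul_cancel₀ hq, one_smul]

lemma uKinvE (hχ : IsBichar χ) (i j : I) :
    uKinv χ i * uE χ j = (χ (eps i) (eps j))⁻¹ • (uE χ j * uKinv χ i) :=
  conj_move χ (hχ.2.2 _ _) (uKinvK χ i) (uKKinv χ i) (uKE χ i j)

lemma uKinvF (hχ : IsBichar χ) (i j : I) :
    uKinv χ i * uF χ j = χ (eps i) (eps j) • (uF χ j * uKinv χ i) := by
  have h := conj_move χ (inv_ne_zero (hχ.2.2 (eps i) (eps j))) (uKinvK χ i) (uKKinv χ i)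
    (uKF χ i j)
  rwa [inv_inv] at h

lemma uLinvE (hχ : IsBichar χ) (i j : I) :
    uLinv χ i * uE χ j = χ (eps j) (eps i) • (uE χ j * uLinv χ i) := by
  have h := conj_move χ (inv_ne_zero (hχ.2.2 (eps j) (eps i))) (uLinvL χ i) (uLLinv χ i)
    (uLE χ i j)
  rwa [inv_inv] at h

lemma uLinvF (hχ : IsBichar χ) (i j : I) :
    uLinv χ i * uF χ j = (χ (eps j) (eps i))⁻¹ • (uF χ j * uLinv χ i) :=
  conj_move χ (hχ.2.2 _ _) (uLinvL χ i) (uLLinv χ i) (uLF χ i j)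

lemma cKinvKinv (i j : I) : uKinv χ i * uKinv χ j = uKinv χ j * uKinv χ i :=
  uComm χ trivial trivial
lemma cKinvLinv (i j : I) : uKinv χ i * uLinv χ j = uLinv χ j * uKinv χ i :=
  uComm χ trivial trivial
lemma cLinvKinv (i j : I) : uLinv χ i * uKinv χ j = uKinv χ j * uLinv χ i :=
  uComm χ trivial trivial
lemma cLinvLinv (i j : I) : uLinv χ i * uLinv χ j = uLinv χ j * uLinv χ i :=
  uComm χ trivial trivial

/-- Images of the generators under `φ₁`. -/
noncomputable def phiGen : UGen I → UAlg χ
  | .K i => uKinv χ i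
  | .Kinv i => uK χ i
  | .L i => uLinv χ i
  | .Linv i => uL χ i
  | .E i => uF χ i * uLinv χ i
  | .F i => uKinv χ i * uE χ i

/-- Images of the generators under the inverse of `φ₁`. -/
noncomputable def psiGen : UGen I → UAlg χ
  | .K i => uKinv χ i
  | .Kinv i => uK χ i
  | .L i => uLinv χ i
  | .Linv i => uL χ i
  | .E i => uKinv χ i * uF χ i
  | .F i => uE χ i * uLinv χ i

lemma hFE (i j : I) :
    uF χ i * uE χ j - uE χ j * uF χ i = -(if j = i then uK χ j - uL χ j else 0) := by
  rw [← uEF χ j i, neg_sub]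

lemma phi_rel (hχ : IsBichar χ) : ∀ ⦃x y⦄, URel 𝕜 χ x y →
    FreeAlgebra.lift 𝕜 (phiGen χ) x = FreeAlgebra.lift 𝕜 (phiGen χ) y := by
  intro x y h
  induction h with
  | comm x y hx hy =>
    simp only [map_mul, FreeAlgebra.lift_ι_apply]
    cases x <;> cases y <;> first
      | exact False.elim hx
      | exact False.elim hy
      | exact uComm χ trivial trivial
  | KKinv i =>
    simp only [map_mul, map_one, FreeAlgebra.lift_ι_apply, phiGen]
    exact uKinvK χ i
  | LLinv i =>
    simp only [map_mul, map_one, FreeAlgebra.lift_ι_apply, phiGen]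
    exact uLinvL χ i
  | KE i j =>
    simp only [map_mul, map_smul, FreeAlgebra.lift_ι_apply, phiGen]
    rw [moveR χ (uKinvF χ hχ i j), cKinvLinv χ i j, ← mul_assoc]
  | LE i j =>
    simp only [map_mul, map_smul, FreeAlgebra.lift_ι_apply, phiGen]
    rw [moveR χ (uLinvF χ hχ i j), cLinvLinv χ i j, ← mul_assoc]
  | KF i j =>
    simp only [map_mul, map_smul, FreeAlgebra.lift_ι_apply, phiGen]
    rw [commR χ (cKinvKinv χ i j), uKinvE χ hχ i j, mul_smul_comm, ← mul_assoc]
  | LF i j =>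
    simp only [map_mul, map_smul, FreeAlgebra.lift_ι_apply, phiGen]
    rw [commR χ (cLinvKinv χ i j), uLinvE χ hχ i j, mul_smul_comm, ← mul_assoc]
  | EF i j =>
    simp only [map_sub, map_mul, map_zero, FreeAlgebra.lift_ι_apply, phiGen,
      apply_ite (FreeAlgebra.lift 𝕜 (phiGen χ))]
    have hq := hχ.2.2 (eps j) (eps i)
    have hA : (uF χ i * uLinv χ i) * (uKinv χ j * uE χ j)
        = uKinv χ j * ((uF χ i * uE χ j) * uLinv χ i) := by
      rw [mul_assoc, commR χ (cLinvKinv χ i j), uLinvE χ hχ i j, mul_smul_comm, mul_smul_comm,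
        moveR χ (rev χ hq (uKinvF χ hχ j i)), smul_smul, mul_inv_cancel₀ hq, one_smul,
        ← mul_assoc (uF χ i)]
    have hB : (uKinv χ j * uE χ j) * (uF χ i * uLinv χ i)
        = uKinv χ j * ((uE χ j * uF χ i) * uLinv χ i) := by
      rw [mul_assoc, ← mul_assoc (uE χ j)]
    rw [hA, hB, ← mul_sub, ← sub_mul, hFE χ i j]
    by_cases h : i = j
    · subst h
      rw [if_pos rfl, if_pos rfl, neg_sub, sub_mul, uLLinv χ i, mul_sub, mul_one,
        ← mul_assoc, uKinvK χ i, one_mul]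
    · rw [if_neg (fun hh => h hh.symm), if_neg h, neg_zero, zero_mul, mul_zero]

lemma psi_rel (hχ : IsBichar χ) : ∀ ⦃x y⦄, URel 𝕜 χ x y →
    FreeAlgebra.lift 𝕜 (psiGen χ) x = FreeAlgebra.lift 𝕜 (psiGen χ) y := by
  intro x y h
  induction h with
  | comm x y hx hy =>
    simp only [map_mul, FreeAlgebra.lift_ι_apply]
    cases x <;> cases y <;> first
      | exact False.elim hx
      | exact False.elim hy
      | exact uComm χ trivial trivial
  | KKinv i =>
    simp only [map_mul, map_one, FreeAlgebra.lift_ι_apply, psiGen]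
    exact uKinvK χ i
  | LLinv i =>
    simp only [map_mul, map_one, FreeAlgebra.lift_ι_apply, psiGen]
    exact uLinvL χ i
  | KE i j =>
    simp only [map_mul, map_smul, FreeAlgebra.lift_ι_apply, psiGen]
    rw [commR χ (cKinvKinv χ i j), uKinvF χ hχ i j, mul_smul_comm, ← mul_assoc]
  | LE i j =>
    simp only [map_mul, map_smul, FreeAlgebra.lift_ι_apply, psiGen]
    rw [commR χ (cLinvKinv χ i j), uLinvF χ hχ i j, mul_smul_comm, ← mul_assoc]
  | KF i j =>
    simp only [map_mul, map_smul, FreeAlgebra.lift_ι_apply, psiGen]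
    rw [moveR χ (uKinvE χ hχ i j), cKinvLinv χ i j, ← mul_assoc]
  | LF i j =>
    simp only [map_mul, map_smul, FreeAlgebra.lift_ι_apply, psiGen]
    rw [moveR χ (uLinvE χ hχ i j), cLinvLinv χ i j, ← mul_assoc]
  | EF i j =>
    simp only [map_sub, map_mul, map_zero, FreeAlgebra.lift_ι_apply, psiGen,
      apply_ite (FreeAlgebra.lift 𝕜 (psiGen χ))]
    have hq := hχ.2.2 (eps i) (eps j)
    have hA : (uKinv χ i * uF χ i) * (uE χ j * uLinv χ j)
        = uKinv χ i * ((uF χ i * uE χ j) * uLinv χ j) := by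
      rw [mul_assoc, ← mul_assoc (uF χ i)]
    have hB : (uE χ j * uLinv χ j) * (uKinv χ i * uF χ i)
        = uKinv χ i * ((uE χ j * uF χ i) * uLinv χ j) := by
      rw [mul_assoc, commR χ (cLinvKinv χ j i), uLinvF χ hχ j i, mul_smul_comm, mul_smul_comm,
        moveR χ (rev χ (inv_ne_zero hq) (uKinvE χ hχ i j)), smul_smul,
        mul_inv_cancel₀ (inv_ne_zero hq), one_smul, ← mul_assoc (uE χ j)]
    rw [hA, hB, ← mul_sub, ← sub_mul, hFE χ i j]
    by_cases h : i = j
    · subst h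
      rw [if_pos rfl, if_pos rfl, neg_sub, sub_mul, uLLinv χ i, mul_sub, mul_one,
        ← mul_assoc, uKinvK χ i, one_mul]
    · rw [if_neg (fun hh => h hh.symm), if_neg h, neg_zero, zero_mul, mul_zero]

/-- The algebra endomorphism `φ₁` of `𝒰(χ)`. -/
noncomputable def phiHom (hχ : IsBichar χ) : UAlg χ →ₐ[𝕜] UAlg χ :=
  RingQuot.liftAlgHom 𝕜 ⟨FreeAlgebra.lift 𝕜 (phiGen χ), phi_rel χ hχ⟩

/-- The algebra endomorphism inverse to `φ₁`. -/
noncomputable def psiHom (hχ : IsBichar χ) : UAlg χ →ₐ[𝕜] UAlg χ :=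
  RingQuot.liftAlgHom 𝕜 ⟨FreeAlgebra.lift 𝕜 (psiGen χ), psi_rel χ hχ⟩

lemma phiHom_gen (hχ : IsBichar χ) (x : UGen I) :
    phiHom χ hχ (mkU χ (FreeAlgebra.ι 𝕜 x)) = phiGen χ x := by
  rw [mkU, phiHom, RingQuot.liftAlgHom_mkAlgHom_apply, FreeAlgebra.lift_ι_apply]

lemma psiHom_gen (hχ : IsBichar χ) (x : UGen I) :
    psiHom χ hχ (mkU χ (FreeAlgebra.ι 𝕜 x)) = psiGen χ x := by
  rw [mkU, psiHom, RingQuot.liftAlgHom_mkAlgHom_apply, FreeAlgebra.lift_ι_apply]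

lemma phiHom_uK (hχ : IsBichar χ) (i : I) : phiHom χ hχ (uK χ i) = uKinv χ i :=
  phiHom_gen χ hχ (.K i)
lemma phiHom_uKinv (hχ : IsBichar χ) (i : I) : phiHom χ hχ (uKinv χ i) = uK χ i :=
  phiHom_gen χ hχ (.Kinv i)
lemma phiHom_uL (hχ : IsBichar χ) (i : I) : phiHom χ hχ (uL χ i) = uLinv χ i :=
  phiHom_gen χ hχ (.L i)
lemma phiHom_uLinv (hχ : IsBichar χ) (i : I) : phiHom χ hχ (uLinv χ i) = uL χ i :=
  phiHom_gen χ hχ (.Linv i)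
lemma phiHom_uE (hχ : IsBichar χ) (i : I) :
    phiHom χ hχ (uE χ i) = uF χ i * uLinv χ i := phiHom_gen χ hχ (.E i)
lemma phiHom_uF (hχ : IsBichar χ) (i : I) :
    phiHom χ hχ (uF χ i) = uKinv χ i * uE χ i := phiHom_gen χ hχ (.F i)

lemma psiHom_uK (hχ : IsBichar χ) (i : I) : psiHom χ hχ (uK χ i) = uKinv χ i :=
  psiHom_gen χ hχ (.K i)
lemma psiHom_uKinv (hχ : IsBichar χ) (i : I) : psiHom χ hχ (uKinv χ i) = uK χ i :=
  psiHom_gen χ hχ (.Kinv i)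
lemma psiHom_uL (hχ : IsBichar χ) (i : I) : psiHom χ hχ (uL χ i) = uLinv χ i :=
  psiHom_gen χ hχ (.L i)
lemma psiHom_uLinv (hχ : IsBichar χ) (i : I) : psiHom χ hχ (uLinv χ i) = uL χ i :=
  psiHom_gen χ hχ (.Linv i)
lemma psiHom_uE (hχ : IsBichar χ) (i : I) :
    psiHom χ hχ (uE χ i) = uKinv χ i * uF χ i := psiHom_gen χ hχ (.E i)
lemma psiHom_uF (hχ : IsBichar χ) (i : I) :
    psiHom χ hχ (uF χ i) = uE χ i * uLinv χ i := psiHom_gen χ hχ (.F i)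

lemma phi_psi (hχ : IsBichar χ) :
    (phiHom χ hχ).comp (psiHom χ hχ) = AlgHom.id 𝕜 (UAlg χ) := by
  apply RingQuot.ringQuot_ext'
  apply FreeAlgebra.hom_ext
  funext x
  show phiHom χ hχ (psiHom χ hχ (mkU χ (FreeAlgebra.ι 𝕜 x))) = mkU χ (FreeAlgebra.ι 𝕜 x)
  cases x with
  | K i => rw [show mkU χ (FreeAlgebra.ι 𝕜 (UGen.K i)) = uK χ i from rfl,
      psiHom_uK χ hχ, phiHom_uKinv χ hχ]
  | Kinv i => rw [show mkU χ (FreeAlgebra.ι 𝕜 (UGen.Kinv i)) = uKinv χ i from rfl,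
      psiHom_uKinv χ hχ, phiHom_uK χ hχ]
  | L i => rw [show mkU χ (FreeAlgebra.ι 𝕜 (UGen.L i)) = uL χ i from rfl,
      psiHom_uL χ hχ, phiHom_uLinv χ hχ]
  | Linv i => rw [show mkU χ (FreeAlgebra.ι 𝕜 (UGen.Linv i)) = uLinv χ i from rfl,
      psiHom_uLinv χ hχ, phiHom_uL χ hχ]
  | E i => rw [show mkU χ (FreeAlgebra.ι 𝕜 (UGen.E i)) = uE χ i from rfl,
      psiHom_uE χ hχ, map_mul, phiHom_uKinv χ hχ, phiHom_uF χ hχ,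
      ← mul_assoc, uKKinv χ i, one_mul]
  | F i => rw [show mkU χ (FreeAlgebra.ι 𝕜 (UGen.F i)) = uF χ i from rfl,
      psiHom_uF χ hχ, map_mul, phiHom_uE χ hχ, phiHom_uLinv χ hχ,
      mul_assoc, uLinvL χ i, mul_one]

lemma psi_phi (hχ : IsBichar χ) :
    (psiHom χ hχ).comp (phiHom χ hχ) = AlgHom.id 𝕜 (UAlg χ) := by
  apply RingQuot.ringQuot_ext'
  apply FreeAlgebra.hom_ext
  funext x
  show psiHom χ hχ (phiHom χ hχ (mkU χ (FreeAlgebra.ι 𝕜 x))) = mkU χ (FreeAlgebra.ι 𝕜 x)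
  cases x with
  | K i => rw [show mkU χ (FreeAlgebra.ι 𝕜 (UGen.K i)) = uK χ i from rfl,
      phiHom_uK χ hχ, psiHom_uKinv χ hχ]
  | Kinv i => rw [show mkU χ (FreeAlgebra.ι 𝕜 (UGen.Kinv i)) = uKinv χ i from rfl,
      phiHom_uKinv χ hχ, psiHom_uK χ hχ]
  | L i => rw [show mkU χ (FreeAlgebra.ι 𝕜 (UGen.L i)) = uL χ i from rfl,
      phiHom_uL χ hχ, psiHom_uLinv χ hχ]
  | Linv i => rw [show mkU χ (FreeAlgebra.ι 𝕜 (UGen.Linv i)) = uLinv χ i from rfl,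
      phiHom_uLinv χ hχ, psiHom_uL χ hχ]
  | E i => rw [show mkU χ (FreeAlgebra.ι 𝕜 (UGen.E i)) = uE χ i from rfl,
      phiHom_uE χ hχ, map_mul, psiHom_uF χ hχ, psiHom_uLinv χ hχ,
      mul_assoc, uLinvL χ i, mul_one]
  | F i => rw [show mkU χ (FreeAlgebra.ι 𝕜 (UGen.F i)) = uF χ i from rfl,
      phiHom_uF χ hχ, map_mul, psiHom_uKinv χ hχ, psiHom_uE χ hχ,
      ← mul_assoc, uKKinv χ i, one_mul]

/-- The algebra automorphism `φ₁` of `𝒰(χ)`. -/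
noncomputable def phiEquiv (hχ : IsBichar χ) : UAlg χ ≃ₐ[𝕜] UAlg χ :=
  AlgEquiv.ofAlgHom (phiHom χ hχ) (psiHom χ hχ) (phi_psi χ hχ) (psi_phi χ hχ)

/-- Prop. (pr:algiso)(4): there is a unique algebra automorphism `φ₁` of `𝒰(χ)`
with `φ₁(K_i) = K_i⁻¹`, `φ₁(K_i⁻¹) = K_i`, `φ₁(L_i) = L_i⁻¹`, `φ₁(L_i⁻¹) = L_i`,
`φ₁(E_i) = F_iL_i⁻¹`, `φ₁(F_i) = K_i⁻¹E_i`. -/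
theorem exists_unique_phi1 (hχ : IsBichar χ) :
    ∃! φ : UAlg χ ≃ₐ[𝕜] UAlg χ,
      (∀ i, φ (uK χ i) = uKinv χ i) ∧
      (∀ i, φ (uKinv χ i) = uK χ i) ∧
      (∀ i, φ (uL χ i) = uLinv χ i) ∧
      (∀ i, φ (uLinv χ i) = uL χ i) ∧
      (∀ i, φ (uE χ i) = uF χ i * uLinv χ i) ∧
      (∀ i, φ (uF χ i) = uKinv χ i * uE χ i) := by
  refine ⟨phiEquiv χ hχ, ⟨fun i => phiHom_uK χ hχ i, fun i => phiHom_uKinv χ hχ i,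
    fun i => phiHom_uL χ hχ i, fun i => phiHom_uLinv χ hχ i,
    fun i => phiHom_uE χ hχ i, fun i => phiHom_uF χ hχ i⟩, ?_⟩
  rintro φ' ⟨h1, h2, h3, h4, h5, h6⟩
  have key : (φ' : UAlg χ →ₐ[𝕜] UAlg χ) = phiHom χ hχ := by
    apply RingQuot.ringQuot_ext'
    apply FreeAlgebra.hom_ext
    funext x
    show φ' (mkU χ (FreeAlgebra.ι 𝕜 x)) = phiHom χ hχ (mkU χ (FreeAlgebra.ι 𝕜 x))
    cases x with
    | K i => exact (h1 i).trans (phiHom_uK χ hχ i).symm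
    | Kinv i => exact (h2 i).trans (phiHom_uKinv χ hχ i).symm
    | L i => exact (h3 i).trans (phiHom_uL χ hχ i).symm
    | Linv i => exact (h4 i).trans (phiHom_uLinv χ hχ i).symm
    | E i => exact (h5 i).trans (phiHom_uE χ hχ i).symm
    | F i => exact (h6 i).trans (phiHom_uF χ hχ i).symm
  exact AlgEquiv.ext fun a => DFunLike.congr_fun key a
end
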